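/- arXiv:1111.1029 — 6 statements merged into one kernel-verified Lean document; each statement's English description precedes it below -/
import Mathlib

section
/- Fix constants a, b ∈ ℝ and c, d > 0, and let τ̄₁, τ₂ : ℝ × ℝ⁴ → ℝ be continuous feedback laws depending on (t, z, ψ, ū, r). Suppose the closed-loop subsystem ż = −ū r, ψ̇ = r, ū̇ = τ̄₁(t, z, ψ, ū, r), ṙ = τ₂(t, z, ψ, ū, r) is GUAS, i.e., there exists a class-κℓ function χ₁ such that for every t₀ ∈ ℝ every solution on [t₀,∞) satisfies ‖(z(t), ψ(t), ū(t), r(t))‖ ≤ χ₁(‖(z(t₀), ψ(t₀), ū(t₀), r(t₀))‖, t − t₀) for all t ≥ t₀. Then the full stabilization system on ℝ⁶ in the state (x̄, v̄, z, ψ, ū, r), given by x̄̇ = (ū − d x̄)/c + (z − v̄) r/d, v̄̇ = −(ū − d x̄) r − d(v̄ − a r − b ψ), ż = −ū r, ψ̇ = r, ū̇ = τ̄₁(t, z, ψ, ū, r), ṙ = τ₂(t, z, ψ, ū, r), is also GUAS: there exists a class-κℓ function χ such that for every t₀ ∈ ℝ every solution on [t₀,∞) satisfies ‖(x̄(t),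 v̄(t), z(t), ψ(t), ū(t), r(t))‖ ≤ χ(‖(x̄(t₀), v̄(t₀), z(t₀), ψ(t₀), ū(t₀), r(t₀))‖, t − t₀) for all t ≥ t₀. -/
open Real Filter

noncomputable def norm4 (a b c d : ℝ) : ℝ := Real.sqrt (a ^ 2 + b ^ 2 + c ^ 2 + d ^ 2)

noncomputable def norm6 (a b c d e f : ℝ) : ℝ :=
  Real.sqrt (a ^ 2 + b ^ 2 + c ^ 2 + d ^ 2 + e ^ 2 + f ^ 2)

def IsClassK (ρ : ℝ → ℝ) : Prop :=
  ContinuousOn ρ (Set.Ici 0) ∧ StrictMonoOn ρ (Set.Ici 0) ∧ ρ 0 = 0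

def IsClassKL (χ : ℝ → ℝ → ℝ) : Prop :=
  (∀ s, 0 ≤ s → IsClassK fun r => χ r s) ∧
  (∀ r, 0 ≤ r → AntitoneOn (fun s => χ r s) (Set.Ici 0)) ∧
  (∀ r, 0 ≤ r → Tendsto (fun s => χ r s) atTop (nhds 0))

/-!
For `V = d² x̄² + v̄²` the terms in `x̄ v̄ r` cancel, and Young's inequality turns the remaining
coupling terms into `V' ≤ -K V + (L / K) (w² + w⁴)` with `K = min (d / c) d` and
`w = ‖(z, ψ, ū, r)‖`, so the `(x̄, v̄)`-subsystem is input-to-state stable with respect to the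
GUAS subsystem. With `ρ` the norm of the initial state, on `[t₀, t]` the input is bounded by
`χ₁ (ρ, 0)`, and on the second half by `χ₁ (ρ, (t - t₀) / 2)`; the comparison lemma on the two
halves bounds `V (t)` by a term decaying like `exp (-K (t - t₀) / 2)` plus a term in
`χ₁ (ρ, (t - t₀) / 2)`, and both are class-κℓ.
-/

open Set

namespace IsClassK

variable {ρ σ : ℝ → ℝ}

lemma monotoneOn (h : IsClassK ρ) : MonotoneOn ρ (Ici 0) := h.2.1.monotoneOn

lemma nonneg (h : IsClassK ρ) {x : ℝ} (hx : 0 ≤ x) : 0 ≤ ρ x :=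
  h.2.2 ▸ h.monotoneOn self_mem_Ici hx hx

lemma add (hρ : IsClassK ρ) (hσ : IsClassK σ) : IsClassK fun x => ρ x + σ x :=
  ⟨hρ.1.add hσ.1, hρ.2.1.add_monotone hσ.monotoneOn, by simp [hρ.2.2, hσ.2.2]⟩

lemma const_mul (hρ : IsClassK ρ) {M : ℝ} (hM : 0 < M) : IsClassK fun x => M * ρ x :=
  ⟨continuousOn_const.mul hρ.1, fun _ hx _ hy hxy => mul_lt_mul_of_pos_left (hρ.2.1 hx hy hxy) hM,
    by simp [hρ.2.2]⟩

lemma comp (hρ : IsClassK ρ) (hσ : IsClassK σ) : IsClassK fun x => ρ (σ x) :=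
  have hmaps : MapsTo σ (Ici 0) (Ici 0) := fun _ hx => hσ.nonneg hx
  ⟨hρ.1.comp hσ.1 hmaps, hρ.2.1.comp hσ.2.1 hmaps, by simp [hσ.2.2, hρ.2.2]⟩

end IsClassK

lemma isClassK_pow {n : ℕ} (hn : n ≠ 0) : IsClassK fun x => x ^ n :=
  ⟨(continuous_pow n).continuousOn, pow_left_strictMonoOn₀ hn, zero_pow hn⟩

lemma isClassK_sqrt : IsClassK Real.sqrt :=
  ⟨continuous_sqrt.continuousOn, strictMonoOn_sqrt, sqrt_zero⟩

namespace IsClassKL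

variable {χ ψ : ℝ → ℝ → ℝ}

lemma nonneg (h : IsClassKL χ) {r s : ℝ} (hr : 0 ≤ r) (hs : 0 ≤ s) : 0 ≤ χ r s :=
  (h.1 s hs).nonneg hr

lemma le_of_le (h : IsClassKL χ) {r r' s s' : ℝ} (hr : 0 ≤ r) (hrr' : r ≤ r') (hs' : 0 ≤ s')
    (hs's : s' ≤ s) : χ r s ≤ χ r' s' :=
  calc χ r s ≤ χ r s' := h.2.1 r hr hs' (hs'.trans hs's) hs's
    _ ≤ χ r' s' := (h.1 s' hs').monotoneOn hr (hr.trans hrr') hrr'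

lemma add (hχ : IsClassKL χ) (hψ : IsClassKL ψ) : IsClassKL fun r s => χ r s + ψ r s :=
  ⟨fun s hs => (hχ.1 s hs).add (hψ.1 s hs), fun r hr => (hχ.2.1 r hr).add (hψ.2.1 r hr),
    fun r hr => by simpa using (hχ.2.2 r hr).add (hψ.2.2 r hr)⟩

lemma comp_div (h : IsClassKL χ) {k : ℝ} (hk : 0 < k) : IsClassKL fun r s => χ r (s / k) :=
  ⟨fun _ hs => h.1 _ (div_nonneg hs hk.le),
    fun r hr _ hx _ hy hxy => h.2.1 r hr (div_nonneg hx hk.le) (div_nonneg hy hk.le)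
      (div_le_div_of_nonneg_right hxy hk.le),
    fun r hr => (h.2.2 r hr).comp (tendsto_id.atTop_div_const hk)⟩

end IsClassKL

lemma IsClassK.comp_isClassKL {γ : ℝ → ℝ} {χ : ℝ → ℝ → ℝ} (hγ : IsClassK γ) (hχ : IsClassKL χ) :
    IsClassKL fun r s => γ (χ r s) := by
  refine ⟨fun s hs => hγ.comp (hχ.1 s hs), fun r hr x hx y hy hxy =>
    hγ.monotoneOn (hχ.nonneg hr hy) (hχ.nonneg hr hx) (hχ.2.1 r hr hx hy hxy), fun r hr => ?_⟩
  have hlim : Tendsto (fun s => χ r s) atTop (nhdsWithin 0 (Ici 0)) :=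
    tendsto_nhdsWithin_of_tendsto_nhds_of_eventually_within _ (hχ.2.2 r hr)
      ((eventually_ge_atTop 0).mono fun s hs => hχ.nonneg hr hs)
  have hγlim := (hγ.1 0 self_mem_Ici).tendsto.comp hlim
  rwa [hγ.2.2] at hγlim

lemma IsClassK.isClassKL_exp_mul {φ : ℝ → ℝ} (hφ : IsClassK φ) {k : ℝ} (hk : 0 < k) :
    IsClassKL fun r s => exp (-k * s) * φ r := by
  refine ⟨fun s _ => hφ.const_mul (exp_pos _), fun r hr x _ y _ hxy =>
    mul_le_mul_of_nonneg_right (exp_le_exp.2 (by nlinarith)) (hφ.nonneg hr), fun r _ => ?_⟩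
  have hexp : Tendsto (fun s => exp (-k * s)) atTop (nhds 0) :=
    tendsto_exp_atBot.comp (tendsto_id.const_mul_atTop_of_neg (neg_lt_zero.2 hk))
  simpa using hexp.mul_const (φ r)

-- The radicand is the bound on `V = d² x̄² + v̄²` given by `le_two_phase_exp_decay`;
-- `√N` turns it into a bound on `‖(x̄, v̄)‖`.
noncomputable def cascadeBound (χ : ℝ → ℝ → ℝ) (G : ℝ → ℝ) (k A N : ℝ) (ρ s : ℝ) : ℝ :=
  √N * √(exp (-k * s) * (A * ρ ^ 2 + G (χ ρ 0)) + G (χ ρ (s / 2))) + χ ρ s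

lemma isClassKL_cascadeBound {χ : ℝ → ℝ → ℝ} {G : ℝ → ℝ} {k A N : ℝ} (hχ : IsClassKL χ)
    (hG : IsClassK G) (hk : 0 < k) (hA : 0 < A) (hN : 0 < N) :
    IsClassKL (cascadeBound χ G k A N) :=
  have hφ : IsClassK fun ρ => A * ρ ^ 2 + G (χ ρ 0) :=
    ((isClassK_pow two_ne_zero).const_mul hA).add (hG.comp (hχ.1 0 le_rfl))
  ((isClassK_sqrt.const_mul (sqrt_pos.2 hN)).comp_isClassKL
    ((hφ.isClassKL_exp_mul hk).add (hG.comp_isClassKL (hχ.comp_div two_pos)))).add hχ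

lemma le_exp_decay_of_hasDerivAt {V V' : ℝ → ℝ} {K ε a b : ℝ} (hK : 0 < K) (hε : 0 ≤ ε)
    (hab : a ≤ b) (hV : ∀ s ∈ Icc a b, HasDerivAt V (V' s) s)
    (hV' : ∀ s ∈ Icc a b, V' s ≤ -K * V s + ε) :
    V b ≤ V a * exp (-K * (b - a)) + ε / K := by
  have hgronwall := le_gronwallBound_of_liminf_deriv_right_le (K := -K)
    (fun s hs => (hV s hs).continuousAt.continuousWithinAt)
    (fun s hs _ hr => (hV s (Ico_subset_Icc_self hs)).hasDerivWithinAt.liminf_right_slope_le hr)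
    le_rfl (fun s hs => hV' s (Ico_subset_Icc_self hs)) b (right_mem_Icc.2 hab)
  rw [gronwallBound_of_K_ne_0 (neg_ne_zero.2 hK.ne')] at hgronwall
  have hdecay : ε / -K * (exp (-K * (b - a)) - 1) ≤ ε / K := by
    rw [div_neg, neg_mul_comm, neg_sub]
    exact mul_le_of_le_one_right (by positivity) (sub_le_self _ (exp_pos _).le)
  linarith

lemma le_two_phase_exp_decay {V V' : ℝ → ℝ} {K ε₀ ε₁ a b : ℝ} (hK : 0 < K) (hε₀ : 0 ≤ ε₀)
    (hε₁ : 0 ≤ ε₁) (hab : a ≤ b) (hVa : 0 ≤ V a) (hV : ∀ s ∈ Icc a b, HasDerivAt V (V' s) s)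
    (h₀ : ∀ s ∈ Icc a ((a + b) / 2), V' s ≤ -K * V s + ε₀)
    (h₁ : ∀ s ∈ Icc ((a + b) / 2) b, V' s ≤ -K * V s + ε₁) :
    V b ≤ (V a + ε₀ / K) * exp (-(K / 2) * (b - a)) + ε₁ / K := by
  have ham : a ≤ (a + b) / 2 := by linarith
  have hmb : (a + b) / 2 ≤ b := by linarith
  have hfirst : V ((a + b) / 2) ≤ V a + ε₀ / K := by
    refine (le_exp_decay_of_hasDerivAt hK hε₀ ham
      (fun s hs => hV s ⟨hs.1, hs.2.trans hmb⟩) h₀).trans ?_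
    gcongr
    exact mul_le_of_le_one_right hVa (exp_le_one_iff.2 (by nlinarith))
  have hsecond := le_exp_decay_of_hasDerivAt hK hε₁ hmb
    (fun s hs => hV s ⟨ham.trans hs.1, hs.2⟩) h₁
  rw [show -K * (b - (a + b) / 2) = -(K / 2) * (b - a) by ring] at hsecond
  exact hsecond.trans (by gcongr)

lemma two_mul_le_mul_sq_add_sq_div {K : ℝ} (hK : 0 < K) (p q : ℝ) :
    2 * p * q ≤ K * p ^ 2 + q ^ 2 / K := by
  rw [show K * p ^ 2 + q ^ 2 / K = ((K * p) ^ 2 + q ^ 2) / K by field_simp, le_div_iff₀ hK]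
  nlinarith [two_mul_le_add_sq (K * p) q]

lemma sqrt_add_le_sqrt_add_sqrt {x y : ℝ} (hx : 0 ≤ x) (hy : 0 ≤ y) : √(x + y) ≤ √x + √y := by
  rw [sqrt_le_iff]
  refine ⟨by positivity, ?_⟩
  nlinarith [sq_sqrt hx, sq_sqrt hy, mul_nonneg (sqrt_nonneg x) (sqrt_nonneg y)]

lemma norm4_le_norm6 (a b c d e f : ℝ) : norm4 c d e f ≤ norm6 a b c d e f :=
  sqrt_le_sqrt (by nlinarith [sq_nonneg a, sq_nonneg b])

lemma norm6_le_sqrt_add_norm4 (a b c d e f : ℝ) :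
    norm6 a b c d e f ≤ √(a ^ 2 + b ^ 2) + norm4 c d e f := by
  rw [norm6, norm4, show a ^ 2 + b ^ 2 + c ^ 2 + d ^ 2 + e ^ 2 + f ^ 2
    = (a ^ 2 + b ^ 2) + (c ^ 2 + d ^ 2 + e ^ 2 + f ^ 2) by ring]
  exact sqrt_add_le_sqrt_add_sqrt (by positivity) (by positivity)

lemma norm4_nonneg (a b c d : ℝ) : 0 ≤ norm4 a b c d := sqrt_nonneg _

lemma sq_norm4 (a b c d : ℝ) : norm4 a b c d ^ 2 = a ^ 2 + b ^ 2 + c ^ 2 + d ^ 2 :=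
  sq_sqrt (by positivity)

noncomputable def interconnectionGain (a b c d : ℝ) : ℝ :=
  2 * (d / c) ^ 2 + 3 * (d * a) ^ 2 + 3 * (d * b) ^ 2 + 5

lemma interconnectionGain_pos (a b c d : ℝ) : 0 < interconnectionGain a b c d := by
  unfold interconnectionGain
  positivity

lemma interconnection_sq_le (a b c d z ψ u r : ℝ) :
    (d * u / c + z * r) ^ 2 + (-(u * r) + d * a * r + d * b * ψ) ^ 2
      ≤ interconnectionGain a b c d * (norm4 z ψ u r ^ 2 + norm4 z ψ u r ^ 4) := by
  rw [show norm4 z ψ u r ^ 4 = (norm4 z ψ u r ^ 2) ^ 2 by ring, sq_norm4, interconnectionGain]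
  set S := z ^ 2 + ψ ^ 2 + u ^ 2 + r ^ 2
  have hz : z ^ 2 ≤ S := by nlinarith [sq_nonneg ψ, sq_nonneg u, sq_nonneg r]
  have hψ : ψ ^ 2 ≤ S := by nlinarith [sq_nonneg z, sq_nonneg u, sq_nonneg r]
  have hu : u ^ 2 ≤ S := by nlinarith [sq_nonneg z, sq_nonneg ψ, sq_nonneg r]
  have hr : r ^ 2 ≤ S := by nlinarith [sq_nonneg z, sq_nonneg ψ, sq_nonneg u]
  have hp : (d * u / c + z * r) ^ 2 ≤ 2 * ((d / c) ^ 2 * u ^ 2) + 2 * (z ^ 2 * r ^ 2) := by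
    calc _ ≤ 2 * (d * u / c) ^ 2 + 2 * (z * r) ^ 2 := by
          nlinarith [sq_nonneg (d * u / c - z * r)]
      _ = _ := by ring
  have hq : (-(u * r) + d * a * r + d * b * ψ) ^ 2
      ≤ 3 * (u ^ 2 * r ^ 2) + 3 * ((d * a) ^ 2 * r ^ 2) + 3 * ((d * b) ^ 2 * ψ ^ 2) := by
    nlinarith [sq_nonneg (u * r + d * a * r), sq_nonneg (u * r + d * b * ψ),
      sq_nonneg (d * a * r - d * b * ψ)]
  have hzr : z ^ 2 * r ^ 2 ≤ S ^ 2 := by rw [sq S]; gcongr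
  have hur : u ^ 2 * r ^ 2 ≤ S ^ 2 := by rw [sq S]; gcongr
  have hcu : (d / c) ^ 2 * u ^ 2 ≤ (d / c) ^ 2 * S := by gcongr
  have har : (d * a) ^ 2 * r ^ 2 ≤ (d * a) ^ 2 * S := by gcongr
  have hbψ : (d * b) ^ 2 * ψ ^ 2 ≤ (d * b) ^ 2 * S := by gcongr
  nlinarith [sq_nonneg (d / c), sq_nonneg (d * a), sq_nonneg (d * b), sq_nonneg S]

lemma lyapunov_deriv_le {a b c d K : ℝ} (hc : 0 < c) (hd : 0 < d) (hK : 0 < K) (hKc : K ≤ d / c)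
    (hKd : K ≤ d) (x v z ψ u r : ℝ) :
    2 * d ^ 2 * x * ((u - d * x) / c + (z - v) * r / d)
        + 2 * v * (-(u - d * x) * r - d * (v - a * r - b * ψ))
      ≤ -K * (d ^ 2 * x ^ 2 + v ^ 2)
        + interconnectionGain a b c d / K * (norm4 z ψ u r ^ 2 + norm4 z ψ u r ^ 4) := by
  set p := d * u / c + z * r
  set q := -(u * r) + d * a * r + d * b * ψ
  have hcancel : 2 * d ^ 2 * x * ((u - d * x) / c + (z - v) * r / d)
        + 2 * v * (-(u - d * x) * r - d * (v - a * r - b * ψ))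
      = -2 * (d / c) * (d * x) ^ 2 - 2 * d * v ^ 2 + 2 * (d * x) * p + 2 * v * q := by
    simp only [p, q]
    field_simp
    ring
  have hp := two_mul_le_mul_sq_add_sq_div hK (d * x) p
  have hq := two_mul_le_mul_sq_add_sq_div hK v q
  have hdx : K * (d * x) ^ 2 ≤ d / c * (d * x) ^ 2 := by gcongr
  have hdv : K * v ^ 2 ≤ d * v ^ 2 := by gcongr
  have hgain : (p ^ 2 + q ^ 2) / K
      ≤ interconnectionGain a b c d / K * (norm4 z ψ u r ^ 2 + norm4 z ψ u r ^ 4) := by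
    rw [div_mul_eq_mul_div]
    gcongr
    exact interconnection_sq_le a b c d z ψ u r
  rw [hcancel]
  linarith [add_div (p ^ 2) (q ^ 2) K]

lemma lyapunov_le_of_input_bound {a b c d K W₀ W₁ t₀ t : ℝ} {xb vb z ψ u r : ℝ → ℝ}
    (hc : 0 < c) (hd : 0 < d) (hK : 0 < K) (hKc : K ≤ d / c) (hKd : K ≤ d) (ht : t₀ ≤ t)
    (hxb : ∀ s ∈ Icc t₀ t, HasDerivAt xb ((u s - d * xb s) / c + (z s - vb s) * r s / d) s)
    (hvb : ∀ s ∈ Icc t₀ t,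
      HasDerivAt vb (-(u s - d * xb s) * r s - d * (vb s - a * r s - b * ψ s)) s)
    (h₀ : ∀ s ∈ Icc t₀ ((t₀ + t) / 2), norm4 (z s) (ψ s) (u s) (r s) ≤ W₀)
    (h₁ : ∀ s ∈ Icc ((t₀ + t) / 2) t, norm4 (z s) (ψ s) (u s) (r s) ≤ W₁) :
    d ^ 2 * xb t ^ 2 + vb t ^ 2
      ≤ (d ^ 2 * xb t₀ ^ 2 + vb t₀ ^ 2
          + interconnectionGain a b c d / K ^ 2 * (W₀ ^ 2 + W₀ ^ 4)) * exp (-(K / 2) * (t - t₀))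
        + interconnectionGain a b c d / K ^ 2 * (W₁ ^ 2 + W₁ ^ 4) := by
  set L := interconnectionGain a b c d
  have hL : 0 ≤ L := (interconnectionGain_pos a b c d).le
  have hderiv : ∀ s ∈ Icc t₀ t, HasDerivAt (fun s => d ^ 2 * xb s ^ 2 + vb s ^ 2)
      (2 * d ^ 2 * xb s * ((u s - d * xb s) / c + (z s - vb s) * r s / d)
        + 2 * vb s * (-(u s - d * xb s) * r s - d * (vb s - a * r s - b * ψ s))) s :=
    fun s hs => (((hxb s hs).pow 2).const_mul _).add ((hvb s hs).pow 2) |>.congr_deriv (by ring)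
  have hrate : ∀ W s, norm4 (z s) (ψ s) (u s) (r s) ≤ W →
      2 * d ^ 2 * xb s * ((u s - d * xb s) / c + (z s - vb s) * r s / d)
        + 2 * vb s * (-(u s - d * xb s) * r s - d * (vb s - a * r s - b * ψ s))
      ≤ -K * (d ^ 2 * xb s ^ 2 + vb s ^ 2) + L / K * (W ^ 2 + W ^ 4) := fun W s hW =>
    (lyapunov_deriv_le hc hd hK hKc hKd _ _ _ _ _ _).trans (by
      have hw := norm4_nonneg (z s) (ψ s) (u s) (r s)
      gcongr)
  have hdecay := le_two_phase_exp_decay hK (by positivity) (by positivity) ht (by positivity)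
    hderiv (fun s hs => hrate W₀ s (h₀ s hs)) (fun s hs => hrate W₁ s (h₁ s hs))
  convert hdecay using 3 <;> field_simp

lemma sq_add_sq_le_mul_weighted {d : ℝ} (hd : 0 < d) (x v : ℝ) :
    x ^ 2 + v ^ 2 ≤ (1 + 1 / d ^ 2) * (d ^ 2 * x ^ 2 + v ^ 2) := by
  have hv : 0 ≤ v ^ 2 / d ^ 2 := by positivity
  have hexpand : (1 + 1 / d ^ 2) * (d ^ 2 * x ^ 2 + v ^ 2)
      = x ^ 2 + v ^ 2 + (d ^ 2 * x ^ 2 + v ^ 2 / d ^ 2) := by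
    field_simp
    ring
  nlinarith [sq_nonneg (d * x)]

lemma weighted_le_sq_norm6 (w a b c d e f : ℝ) :
    w ^ 2 * a ^ 2 + b ^ 2 ≤ (w ^ 2 + 1) * norm6 a b c d e f ^ 2 := by
  rw [norm6, sq_sqrt (by positivity)]
  nlinarith [sq_nonneg w, sq_nonneg a, sq_nonneg b,
    mul_nonneg (sq_nonneg w) (by positivity : 0 ≤ c ^ 2 + d ^ 2 + e ^ 2 + f ^ 2)]

theorem stmt1_general (a b c d : ℝ) (hc : 0 < c) (hd : 0 < d)
    (τ₁ τ₂ : ℝ → ℝ → ℝ → ℝ → ℝ → ℝ)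
    (hGUAS : ∃ χ₁ : ℝ → ℝ → ℝ, IsClassKL χ₁ ∧
      ∀ t₀ : ℝ, ∀ z ψ u r : ℝ → ℝ,
        (∀ t, t₀ ≤ t →
          HasDerivAt z (-(u t * r t)) t ∧
          HasDerivAt ψ (r t) t ∧
          HasDerivAt u (τ₁ t (z t) (ψ t) (u t) (r t)) t ∧
          HasDerivAt r (τ₂ t (z t) (ψ t) (u t) (r t)) t) →
        ∀ t, t₀ ≤ t →
          norm4 (z t) (ψ t) (u t) (r t) ≤
            χ₁ (norm4 (z t₀) (ψ t₀) (u t₀) (r t₀)) (t - t₀)) :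
    ∃ χ : ℝ → ℝ → ℝ, IsClassKL χ ∧
      ∀ t₀ : ℝ, ∀ xb vb z ψ u r : ℝ → ℝ,
        (∀ t, t₀ ≤ t →
          HasDerivAt xb ((u t - d * xb t) / c + (z t - vb t) * r t / d) t ∧
          HasDerivAt vb (-(u t - d * xb t) * r t - d * (vb t - a * r t - b * ψ t)) t ∧
          HasDerivAt z (-(u t * r t)) t ∧
          HasDerivAt ψ (r t) t ∧
          HasDerivAt u (τ₁ t (z t) (ψ t) (u t) (r t)) t ∧
          HasDerivAt r (τ₂ t (z t) (ψ t) (u t) (r t)) t) →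
        ∀ t, t₀ ≤ t →
          norm6 (xb t) (vb t) (z t) (ψ t) (u t) (r t) ≤
            χ (norm6 (xb t₀) (vb t₀) (z t₀) (ψ t₀) (u t₀) (r t₀)) (t - t₀) := by
  obtain ⟨χ₁, hχ₁, hsub⟩ := hGUAS
  set K := min (d / c) d
  have hK : 0 < K := lt_min (div_pos hd hc) hd
  set G : ℝ → ℝ := fun w => interconnectionGain a b c d / K ^ 2 * (w ^ 2 + w ^ 4)
  have hG : IsClassK G := ((isClassK_pow two_ne_zero).add (isClassK_pow four_ne_zero)).const_mul
    (div_pos (interconnectionGain_pos a b c d) (by positivity))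
  refine ⟨cascadeBound χ₁ G (K / 2) (d ^ 2 + 1) (1 + 1 / d ^ 2),
    isClassKL_cascadeBound hχ₁ hG (half_pos hK) (by positivity) (by positivity), ?_⟩
  intro t₀ xb vb z ψ u r hsol t ht
  set ρ := norm6 (xb t₀) (vb t₀) (z t₀) (ψ t₀) (u t₀) (r t₀)
  have hinput : ∀ s, t₀ ≤ s → ∀ σ, 0 ≤ σ → σ ≤ s - t₀ → norm4 (z s) (ψ s) (u s) (r s) ≤ χ₁ ρ σ :=
    fun s hs σ hσ hσs => (hsub t₀ z ψ u r (fun τ hτ => (hsol τ hτ).2.2) s hs).trans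
      (hχ₁.le_of_le (norm4_nonneg _ _ _ _) (norm4_le_norm6 _ _ _ _ _ _) hσ hσs)
  have hV := lyapunov_le_of_input_bound (a := a) (b := b) hc hd hK (min_le_left _ _)
    (min_le_right _ _) ht (fun s hs => (hsol s hs.1).1) (fun s hs => (hsol s hs.1).2.1)
    (fun s hs => hinput s hs.1 0 le_rfl (by linarith [hs.1]))
    (fun s hs => hinput s (by linarith [hs.1]) ((t - t₀) / 2) (by linarith) (by linarith [hs.1]))
  have hV₀ := weighted_le_sq_norm6 d (xb t₀) (vb t₀) (z t₀) (ψ t₀) (u t₀) (r t₀)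
  have hxv : xb t ^ 2 + vb t ^ 2 ≤ (1 + 1 / d ^ 2) * (exp (-(K / 2) * (t - t₀))
      * ((d ^ 2 + 1) * ρ ^ 2 + G (χ₁ ρ 0)) + G (χ₁ ρ ((t - t₀) / 2))) := by
    refine (sq_add_sq_le_mul_weighted hd _ _).trans (mul_le_mul_of_nonneg_left ?_ (by positivity))
    refine hV.trans ?_
    rw [mul_comm (exp _)]
    gcongr
  calc norm6 (xb t) (vb t) (z t) (ψ t) (u t) (r t)
      ≤ √(xb t ^ 2 + vb t ^ 2) + norm4 (z t) (ψ t) (u t) (r t) :=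
        norm6_le_sqrt_add_norm4 _ _ _ _ _ _
    _ ≤ cascadeBound χ₁ G (K / 2) (d ^ 2 + 1) (1 + 1 / d ^ 2) ρ (t - t₀) := by
      rw [cascadeBound, ← sqrt_mul (by positivity)]
      gcongr
      exact hinput t ht _ (sub_nonneg.2 ht) le_rfl

/-- Cascade lemma for point stabilization: if the (z, ψ, ū, r)-subsystem is GUAS under the
feedback laws (τ̄₁, τ₂), then the full stabilization system including (x̄, v̄) is GUAS. -/
theorem stmt1 (a b c d : ℝ) (hc : 0 < c) (hd : 0 < d)
    (τ₁ τ₂ : ℝ → ℝ → ℝ → ℝ → ℝ → ℝ)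
    (hτ₁cont : Continuous fun p : ℝ × ℝ × ℝ × ℝ × ℝ =>
      τ₁ p.1 p.2.1 p.2.2.1 p.2.2.2.1 p.2.2.2.2)
    (hτ₂cont : Continuous fun p : ℝ × ℝ × ℝ × ℝ × ℝ =>
      τ₂ p.1 p.2.1 p.2.2.1 p.2.2.2.1 p.2.2.2.2)
    (hGUAS : ∃ χ₁ : ℝ → ℝ → ℝ, IsClassKL χ₁ ∧
      ∀ t₀ : ℝ, ∀ z ψ u r : ℝ → ℝ,
        (∀ t, t₀ ≤ t →
          HasDerivAt z (-(u t * r t)) t ∧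
          HasDerivAt ψ (r t) t ∧
          HasDerivAt u (τ₁ t (z t) (ψ t) (u t) (r t)) t ∧
          HasDerivAt r (τ₂ t (z t) (ψ t) (u t) (r t)) t) →
        ∀ t, t₀ ≤ t →
          norm4 (z t) (ψ t) (u t) (r t) ≤
            χ₁ (norm4 (z t₀) (ψ t₀) (u t₀) (r t₀)) (t - t₀)) :
    ∃ χ : ℝ → ℝ → ℝ, IsClassKL χ ∧
      ∀ t₀ : ℝ, ∀ xb vb z ψ u r : ℝ → ℝ,
        (∀ t, t₀ ≤ t →
          HasDerivAt xb ((u t - d * xb t) / c + (z t - vb t) * r t / d) t ∧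
          HasDerivAt vb (-(u t - d * xb t) * r t - d * (vb t - a * r t - b * ψ t)) t ∧
          HasDerivAt z (-(u t * r t)) t ∧
          HasDerivAt ψ (r t) t ∧
          HasDerivAt u (τ₁ t (z t) (ψ t) (u t) (r t)) t ∧
          HasDerivAt r (τ₂ t (z t) (ψ t) (u t) (r t)) t) →
        ∀ t, t₀ ≤ t →
          norm6 (xb t) (vb t) (z t) (ψ t) (u t) (r t) ≤
            χ (norm6 (xb t₀) (vb t₀) (z t₀) (ψ t₀) (u t₀) (r t₀)) (t - t₀) :=
  stmt1_general a b c d hc hd τ₁ τ₂ hGUAS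
end

section
/- Let a, b ∈ ℝ and c, d > 0. Let u_d : [0,∞) → ℝ be twice differentiable, r_d : [0,∞) → ℝ differentiable, and v_d : [0,∞) → ℝ differentiable with v̇_d = −a ṙ_d − b r_d − c u_d r_d − d v_d, and assume u_d, u̇_d, r_d, ṙ_d are bounded on [0,∞). Let τ̄_{1e}, τ_{2e} : ℝ × ℝ⁴ → ℝ be continuous feedback laws depending on (t, z_e, ψ_e, ū_e, r_e), and suppose the closed-loop subsystem ż_e = Φ(t, ψ_e) ψ_e − ū_e (r_e + r_d), ψ̇_e = r_e, ṙ_e = τ_{2e}, ū̇_e = τ̄_{1e} is GKES: there exist a class-κ function ρ₁ and γ > 0 such that every solution on [0,∞) satisfies ‖(z_e(t), ψ_e(t), ū_e(t), r_e(t))‖ ≤ ρ₁(‖(z_e(0), ψ_e(0), ū_e(0), r_e(0))‖) e^{−γ t}. Then the full closed-loop error system, obtained by adjoining the states (x_e, v̄_e) with dynamics ẋ_e = −(d/c) x_e − (1/d)(r_e + r_d) v̄_e + D₃ and v̄̇_e = −d v̄_e + d x_e (r_e + r_d) + D₄, where D₃ = ū_e/c − α(t, ψ_e) ψ_e + 0.5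 u_d ψ_e² − v_d ψ_e + z_e (r_e + r_d)/d and D₄ = d(a r_e + b ψ_e + c u_d ψ_e) − ū_e (r_e + r_d) + c u̇_d ψ_e, is also GKES: there exist a class-κ function ρ₄ and γ' > 0 such that every solution on [0,∞) satisfies ‖(x_e(t), v̄_e(t), z_e(t), ψ_e(t), ū_e(t), r_e(t))‖ ≤ ρ₄(‖(x_e(0), v̄_e(0), z_e(0), ψ_e(0), ū_e(0), r_e(0))‖) e^{−γ' t} for all t ≥ 0. -/
/-!
The reference signal `v_d` solves `v̇_d = g - d v_d` with `g` bounded, so it is bounded too.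
Consequently the perturbations `D₃`, `D₄` are at most `(A + B ‖ζ‖) ‖ζ‖`, where
`ζ = (z_e, ψ_e, ū_e, r_e)` is the state of the GKES subsystem, and they decay like `e^{-γt}`.
For `(x_e, v̄_e)` take `V = d x_e² + v̄_e² / d`: the time-varying coupling through `r_e + r_d`
cancels in `V̇`, and Young's inequality gives `V̇ ≤ -k V + Q e^{-2γt}` with `k = min (d/c) d`.
An integrating factor turns this into `V(t) ≤ V(0) e^{-kt} + Q / (k - μ) e^{-μt}` for any
`μ < k`, `μ ≤ 2γ`, and `Q` grows with `ρ₁` of the initial norm, which gives the class-κ bound.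
-/

open Real Filter

open Set

lemma abs_mul_le_of_abs_le {x y X Y : ℝ} (hx : |x| ≤ X) (hy : |y| ≤ Y) :
    |x * y| ≤ X * Y := by
  rw [abs_mul]
  exact mul_le_mul hx hy (abs_nonneg _) ((abs_nonneg _).trans hx)

lemma le_of_hasDerivAt_le_neg_mul_add_exp {V V' : ℝ → ℝ} {k μ B : ℝ} (hμk : μ < k)
    (hB : 0 ≤ B) (hV : ∀ t, 0 ≤ t → HasDerivAt V (V' t) t)
    (hV' : ∀ t, 0 ≤ t → V' t ≤ -k * V t + B * exp (-μ * t)) {t : ℝ} (ht : 0 ≤ t) :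
    V t ≤ V 0 * exp (-k * t) + B / (k - μ) * exp (-μ * t) := by
  have hkμ : 0 < k - μ := sub_pos.mpr hμk
  set C := B / (k - μ)
  have hexp (a s : ℝ) : HasDerivAt (fun s => exp (a * s)) (exp (a * s) * a) s := by
    simpa using ((hasDerivAt_id s).const_mul a).exp
  have hW (s : ℝ) (hs : 0 ≤ s) := ((hexp k s).mul (hV s hs)).sub ((hexp (k - μ) s).const_mul C)
  -- integrating factor: `exp (k s) V s - C exp ((k - μ) s)` is nonincreasing
  have hanti : AntitoneOn (fun s => exp (k * s) * V s - C * exp ((k - μ) * s)) (Ici 0) := by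
    refine antitoneOn_of_hasDerivWithinAt_nonpos (convex_Ici 0)
      (fun s hs => (hW s hs).continuousAt.continuousWithinAt)
      (fun s hs => (hW s (interior_subset hs)).hasDerivWithinAt) (fun s hs => ?_)
    have hsplit : exp ((k - μ) * s) = exp (k * s) * exp (-μ * s) := by
      rw [← exp_add]; ring_nf
    have hC : C * (k - μ) = B := div_mul_cancel₀ B hkμ.ne'
    have := mul_le_mul_of_nonneg_left (hV' s (interior_subset hs)) (exp_pos (k * s)).le
    calc _ = exp (k * s) * (V' s + k * V s) - C * (k - μ) * exp ((k - μ) * s) := by ring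
      _ ≤ 0 := by rw [hC, hsplit]; nlinarith
  have h := hanti self_mem_Ici ht ht
  simp only [mul_zero, exp_zero, one_mul, mul_one] at h
  have hinv : exp (-k * t) * exp (k * t) = 1 := by rw [← exp_add]; simp
  have hμ : exp (-k * t) * exp ((k - μ) * t) = exp (-μ * t) := by rw [← exp_add]; ring_nf
  have hC : 0 ≤ C * exp (-k * t) := mul_nonneg (div_nonneg hB hkμ.le) (exp_pos _).le
  calc V t = exp (-k * t) * (exp (k * t) * V t - C * exp ((k - μ) * t)) + C * exp (-μ * t) := by
        linear_combination -V t * hinv + C * hμ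
    _ ≤ exp (-k * t) * (V 0 - C) + C * exp (-μ * t) := by gcongr
    _ ≤ _ := by nlinarith

lemma abs_le_of_hasDerivAt_sub_mul {v g : ℝ → ℝ} {k G : ℝ} (hk : 0 < k)
    (hv : ∀ t, 0 ≤ t → HasDerivAt v (g t - k * v t) t) (hg : ∀ t, 0 ≤ t → |g t| ≤ G)
    {t : ℝ} (ht : 0 ≤ t) : |v t| ≤ |v 0| + G / k := by
  have hG : 0 ≤ G := (abs_nonneg _).trans (hg 0 le_rfl)
  have hdecay : exp (-k * t) ≤ 1 := exp_le_one_iff.mpr (by nlinarith)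
  have hup := le_of_hasDerivAt_le_neg_mul_add_exp (V := v) (μ := 0) hk hG hv (fun s hs => by
    simp only [neg_zero, zero_mul, exp_zero, mul_one]
    linarith [le_abs_self (g s), hg s hs]) ht
  have hlo := le_of_hasDerivAt_le_neg_mul_add_exp (V := fun s => -v s) (μ := 0) hk hG
    (fun s hs => (hv s hs).neg) (fun s hs => by
      simp only [neg_zero, zero_mul, exp_zero, mul_one]
      linarith [neg_abs_le (g s), hg s hs]) ht
  simp only [neg_zero, zero_mul, exp_zero, mul_one, sub_zero] at hup hlo
  rw [abs_le]
  constructor <;> nlinarith [le_abs_self (v 0), neg_abs_le (v 0), exp_pos (-k * t)]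

lemma exp_sq_le_exp {γ μ t : ℝ} (hμ : μ ≤ 2 * γ) (ht : 0 ≤ t) :
    exp (-γ * t) ^ 2 ≤ exp (-μ * t) := by
  rw [← exp_nat_mul, exp_le_exp]
  push_cast
  nlinarith

lemma sqrt_le_sqrt_mul_exp {S X μ t : ℝ} (h : S ≤ X * exp (-μ * t)) :
    √S ≤ √X * exp (-(μ / 2) * t) := by
  have hexp : exp (-μ * t) = exp (-(μ / 2) * t) ^ 2 := by rw [← exp_nat_mul]; ring_nf
  rw [← sqrt_sq (exp_pos _).le, ← sqrt_mul' _ (sq_nonneg _), ← hexp]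
  exact sqrt_le_sqrt h

lemma abs_le_norm4 (a b c d : ℝ) :
    |a| ≤ norm4 a b c d ∧ |b| ≤ norm4 a b c d ∧
      |c| ≤ norm4 a b c d ∧ |d| ≤ norm4 a b c d := by
  refine ⟨?_, ?_, ?_, ?_⟩ <;> apply abs_le_sqrt <;>
    linarith [sq_nonneg a, sq_nonneg b, sq_nonneg c, sq_nonneg d]

lemma norm6_eq (a b c d e f : ℝ) :
    norm6 a b c d e f = √(a ^ 2 + b ^ 2 + norm4 c d e f ^ 2) := by
  rw [norm4, sq_sqrt (by positivity), norm6]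
  ring_nf

lemma IsClassK.nonneg_s4 {ρ : ℝ → ℝ} (hρ : IsClassK ρ) {s : ℝ} (hs : 0 ≤ s) :
    0 ≤ ρ s :=
  hρ.2.2 ▸ hρ.2.1.monotoneOn self_mem_Ici hs hs

lemma IsClassK.sqrt_mul_sq_add_comp {ρ F : ℝ → ℝ} {A : ℝ} (hρ : IsClassK ρ) (hA : 0 < A)
    (hF : Continuous F) (hFm : MonotoneOn F (Ici 0)) (hF0 : F 0 = 0) :
    IsClassK fun s => √(A * s ^ 2 + F (ρ s)) := by
  have hFρ {s : ℝ} (hs : 0 ≤ s) : 0 ≤ F (ρ s) :=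
    hF0 ▸ hFm self_mem_Ici (hρ.nonneg_s4 hs) (hρ.nonneg_s4 hs)
  refine ⟨((continuousOn_const.mul (continuousOn_pow 2)).add (hF.comp_continuousOn hρ.1)).sqrt,
    fun x hx y hy hxy => ?_, by simp [hρ.2.2, hF0]⟩
  have hx : (0 : ℝ) ≤ x := hx
  have hFxy : F (ρ x) ≤ F (ρ y) :=
    hFm (hρ.nonneg_s4 hx) (hρ.nonneg_s4 hy) (hρ.2.1.monotoneOn hx hy hxy.le)
  exact sqrt_lt_sqrt (by have := hFρ hx; positivity)
    (add_lt_add_of_lt_of_le (by gcongr) hFxy)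

lemma sq_add_sq_le_mul_lyapunov {d : ℝ} (hd : 0 < d) (x v : ℝ) :
    x ^ 2 + v ^ 2 ≤ (d + 1 / d) * (d * x ^ 2 + v ^ 2 / d) := by
  have : (d + 1 / d) * (d * x ^ 2 + v ^ 2 / d) = x ^ 2 + v ^ 2 + (d * x) ^ 2 + (v / d) ^ 2 := by
    field_simp
    ring
  nlinarith [sq_nonneg (d * x), sq_nonneg (v / d)]

lemma lyapunov_le_mul_sq_add_sq {d : ℝ} (hd : 0 < d) (x v : ℝ) :
    d * x ^ 2 + v ^ 2 / d ≤ (d + 1 / d) * (x ^ 2 + v ^ 2) := by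
  have : (d + 1 / d) * (x ^ 2 + v ^ 2) = d * x ^ 2 + v ^ 2 / d + d * v ^ 2 + x ^ 2 / d := by
    field_simp
    ring
  have : 0 ≤ d * v ^ 2 + x ^ 2 / d := by positivity
  linarith

lemma lyapunov_deriv_le_s4 {c d k x v R D₃ D₄ : ℝ} (hd : 0 < d) (hk : 0 < k) (hkc : k ≤ d / c)
    (hkd : k ≤ d) :
    2 * d * x * (-(d / c) * x - (1 / d) * R * v + D₃) +
        2 * v * (-d * v + d * x * R + D₄) / d ≤
      -k * (d * x ^ 2 + v ^ 2 / d) + (d * D₃ ^ 2 + D₄ ^ 2 / d) / k := by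
  have hkc' : 0 ≤ d / c - k := sub_nonneg.mpr hkc
  have hkd' : 0 ≤ 1 - k / d := by rw [sub_nonneg, div_le_one hd]; exact hkd
  -- Young's inequality on both cross terms; the coupling through `R` cancels
  have key : -k * (d * x ^ 2 + v ^ 2 / d) + (d * D₃ ^ 2 + D₄ ^ 2 / d) / k -
      (2 * d * x * (-(d / c) * x - (1 / d) * R * v + D₃) +
        2 * v * (-d * v + d * x * R + D₄) / d) =
      d / k * (k * x - D₃) ^ 2 + (k * v - D₄) ^ 2 / (d * k) + 2 * d * x ^ 2 * (d / c - k) +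
        2 * v ^ 2 * (1 - k / d) := by
    field_simp
    ring
  have : 0 ≤ d / k * (k * x - D₃) ^ 2 + (k * v - D₄) ^ 2 / (d * k) +
      2 * d * x ^ 2 * (d / c - k) + 2 * v ^ 2 * (1 - k / d) := by positivity
  linarith

lemma cascade_lyapunov_le {c d k μ B : ℝ} (hd : 0 < d) (hk : 0 < k) (hkc : k ≤ d / c)
    (hkd : k ≤ d) (hμk : μ < k) (hB : 0 ≤ B) {x v R D₃ D₄ : ℝ → ℝ}
    (hx : ∀ t, 0 ≤ t → HasDerivAt x (-(d / c) * x t - (1 / d) * R t * v t + D₃ t) t)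
    (hv : ∀ t, 0 ≤ t → HasDerivAt v (-d * v t + d * x t * R t + D₄ t) t)
    (hD : ∀ t, 0 ≤ t → d * D₃ t ^ 2 + D₄ t ^ 2 / d ≤ B * exp (-μ * t))
    {t : ℝ} (ht : 0 ≤ t) :
    d * x t ^ 2 + v t ^ 2 / d ≤
      (d * x 0 ^ 2 + v 0 ^ 2 / d) * exp (-k * t) + B / k / (k - μ) * exp (-μ * t) := by
  refine le_of_hasDerivAt_le_neg_mul_add_exp (V := fun s => d * x s ^ 2 + v s ^ 2 / d) hμk
    (div_nonneg hB hk.le)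
    (fun s hs => (((hx s hs).pow 2).const_mul d).add (((hv s hs).pow 2).div_const d))
    (fun s hs => ?_) ht
  calc _ = 2 * d * x s * (-(d / c) * x s - (1 / d) * R s * v s + D₃ s) +
        2 * v s * (-d * v s + d * x s * R s + D₄ s) / d := by push_cast; ring
    _ ≤ _ := lyapunov_deriv_le_s4 hd hk hkc hkd
    _ ≤ _ := by
      rw [div_mul_eq_mul_div]
      gcongr
      exact hD s hs

lemma norm6_le_of_lyapunov_le {d k μ γ C P t : ℝ} (hd : 0 < d) (hμk : μ ≤ k)
    (hμγ : μ ≤ 2 * γ) (ht : 0 ≤ t) {x v z ψ u r : ℝ → ℝ}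
    (hV : d * x t ^ 2 + v t ^ 2 / d ≤
      (d * x 0 ^ 2 + v 0 ^ 2 / d) * exp (-k * t) + C * exp (-μ * t))
    (hn : norm4 (z t) (ψ t) (u t) (r t) ≤ P * exp (-γ * t)) :
    norm6 (x t) (v t) (z t) (ψ t) (u t) (r t) ≤
      √((d + 1 / d) ^ 2 * norm6 (x 0) (v 0) (z 0) (ψ 0) (u 0) (r 0) ^ 2 +
        ((d + 1 / d) * C + P ^ 2)) * exp (-(μ / 2) * t) := by
  have hV₀ : d * x 0 ^ 2 + v 0 ^ 2 / d ≤
      (d + 1 / d) * norm6 (x 0) (v 0) (z 0) (ψ 0) (u 0) (r 0) ^ 2 := by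
    refine (lyapunov_le_mul_sq_add_sq hd _ _).trans ?_
    rw [norm6_eq, sq_sqrt (by positivity)]
    exact mul_le_mul_of_nonneg_left (le_add_of_nonneg_right (sq_nonneg _)) (by positivity)
  have hn₂ : norm4 (z t) (ψ t) (u t) (r t) ^ 2 ≤ P ^ 2 * exp (-μ * t) :=
    calc _ ≤ (P * exp (-γ * t)) ^ 2 := pow_le_pow_left₀ (sqrt_nonneg _) hn 2
      _ = P ^ 2 * exp (-γ * t) ^ 2 := by ring
      _ ≤ _ := mul_le_mul_of_nonneg_left (exp_sq_le_exp hμγ ht) (sq_nonneg _)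
  have hkt : exp (-k * t) ≤ exp (-μ * t) := exp_le_exp.mpr (by nlinarith)
  rw [norm6_eq]
  refine sqrt_le_sqrt_mul_exp ?_
  calc _ ≤ (d + 1 / d) * ((d * x 0 ^ 2 + v 0 ^ 2 / d) * exp (-k * t) + C * exp (-μ * t)) +
        P ^ 2 * exp (-μ * t) := by
        linarith [sq_add_sq_le_mul_lyapunov hd (x t) (v t),
          mul_le_mul_of_nonneg_left hV (by positivity : 0 ≤ d + 1 / d)]
    _ ≤ (d + 1 / d) * ((d + 1 / d) * norm6 (x 0) (v 0) (z 0) (ψ 0) (u 0) (r 0) ^ 2 *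
          exp (-μ * t) + C * exp (-μ * t)) + P ^ 2 * exp (-μ * t) := by
        gcongr
    _ = _ := by ring

lemma exists_reference_bound {a b c d : ℝ} (hd : 0 < d) {ud ud' rd rd' vd : ℝ → ℝ}
    (hvd : ∀ t : ℝ, 0 ≤ t →
      HasDerivAt vd (-a * rd' t - b * rd t - c * ud t * rd t - d * vd t) t)
    (hbdd : ∃ M : ℝ, ∀ t : ℝ, 0 ≤ t →
      |ud t| ≤ M ∧ |ud' t| ≤ M ∧ |rd t| ≤ M ∧ |rd' t| ≤ M) :
    ∃ M, 0 ≤ M ∧ ∀ t, 0 ≤ t →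
      |ud t| ≤ M ∧ |ud' t| ≤ M ∧ |rd t| ≤ M ∧ |rd' t| ≤ M ∧ |vd t| ≤ M := by
  obtain ⟨M₀, hM₀⟩ := hbdd
  have hforce (t : ℝ) (ht : 0 ≤ t) :
      |-a * rd' t - b * rd t - c * ud t * rd t| ≤ (|a| + |b| + |c| * M₀) * M₀ := by
    obtain ⟨hud, -, hrd, hrd'⟩ := hM₀ t ht
    have h₁ := abs_mul_le_of_abs_le (le_refl |a|) hrd'
    have h₂ := abs_mul_le_of_abs_le (le_refl |b|) hrd
    have h₃ := abs_mul_le_of_abs_le (abs_mul_le_of_abs_le (le_refl |c|) hud) hrd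
    rw [abs_le] at h₁ h₂ h₃ ⊢
    constructor <;> linarith [h₁.1, h₁.2, h₂.1, h₂.2, h₃.1, h₃.2]
  refine ⟨max M₀ (|vd 0| + (|a| + |b| + |c| * M₀) * M₀ / d),
    (abs_nonneg _).trans ((hM₀ 0 le_rfl).1.trans (le_max_left _ _)), fun t ht => ?_⟩
  obtain ⟨hud, hud', hrd, hrd'⟩ := hM₀ t ht
  exact ⟨hud.trans (le_max_left _ _), hud'.trans (le_max_left _ _), hrd.trans (le_max_left _ _),
    hrd'.trans (le_max_left _ _),
    (abs_le_of_hasDerivAt_sub_mul hd hvd hforce ht).trans (le_max_right _ _)⟩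

lemma abs_ite_div_mul_self_le {u v ψ M : ℝ} (hu : |u| ≤ M) (hv : |v| ≤ M) :
    |(if ψ = 0 then 0 else (u * (cos ψ - 1 + ψ ^ 2 / 2) + v * (sin ψ - ψ)) / ψ) * ψ| ≤
      M / 2 * ψ ^ 2 + 2 * M * |ψ| := by
  have hM : 0 ≤ M := (abs_nonneg _).trans hu
  split_ifs with hψ
  · simp [hψ]
  rw [div_mul_cancel₀ _ hψ]
  have hcos : |cos ψ - 1 + ψ ^ 2 / 2| ≤ ψ ^ 2 / 2 := by
    rw [abs_le]
    constructor <;> linarith [one_sub_sq_div_two_le_cos (x := ψ), cos_le_one ψ, sq_nonneg ψ]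
  have hsin : |sin ψ - ψ| ≤ 2 * |ψ| := by
    linarith [abs_sub (sin ψ) ψ, abs_sin_le_abs (x := ψ)]
  calc _ ≤ |u * (cos ψ - 1 + ψ ^ 2 / 2)| + |v * (sin ψ - ψ)| := abs_add_le _ _
    _ ≤ M * (ψ ^ 2 / 2) + M * (2 * |ψ|) :=
        add_le_add (abs_mul_le_of_abs_le hu hcos) (abs_mul_le_of_abs_le hv hsin)
    _ = _ := by ring

lemma abs_perturbation_x_le {c d M e z ψ u r ud vd rd A : ℝ} (hc : 0 < c) (hd : 0 < d)
    (hz : |z| ≤ e) (hψ : |ψ| ≤ e) (hu : |u| ≤ e) (hr : |r| ≤ e)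
    (hud : |ud| ≤ M) (hvd : |vd| ≤ M) (hrd : |rd| ≤ M)
    (hA : |A * ψ| ≤ M / 2 * ψ ^ 2 + 2 * M * |ψ|) :
    |u / c - A * ψ + 0.5 * ud * ψ ^ 2 - vd * ψ + z * (r + rd) / d| ≤
      (1 / c + 3 * M + M / d + (M + 1 / d) * e) * e := by
  have hM : 0 ≤ M := (abs_nonneg _).trans hud
  have hψ2 : |ψ ^ 2| ≤ e * e := by simpa [sq] using abs_mul_le_of_abs_le hψ hψ
  have h1 : |u / c| ≤ e / c := by rw [abs_div, abs_of_pos hc]; gcongr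
  have h2 : |0.5 * ud * ψ ^ 2| ≤ 0.5 * (M * (e * e)) := by
    rw [mul_assoc, abs_mul, abs_of_pos (by norm_num : (0:ℝ) < 0.5)]
    gcongr
    exact abs_mul_le_of_abs_le hud hψ2
  have h3 : |vd * ψ| ≤ M * e := abs_mul_le_of_abs_le hvd hψ
  have h4 : |z * (r + rd) / d| ≤ e * (e + M) / d := by
    rw [abs_div, abs_of_pos hd]
    gcongr
    exact abs_mul_le_of_abs_le hz ((abs_add_le _ _).trans (add_le_add hr hrd))
  have h5 : |A * ψ| ≤ M / 2 * (e * e) + 2 * M * e := by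
    rw [abs_of_nonneg (sq_nonneg ψ)] at hψ2
    nlinarith [mul_le_mul_of_nonneg_left hψ hM]
  have hsum : (1 / c + 3 * M + M / d + (M + 1 / d) * e) * e =
      e / c + (M / 2 * (e * e) + 2 * M * e) + 0.5 * (M * (e * e)) + M * e + e * (e + M) / d := by
    ring
  rw [hsum]
  rw [abs_le] at h1 h2 h3 h4 h5 ⊢
  constructor <;> linarith [h1.1, h1.2, h2.1, h2.2, h3.1, h3.2, h4.1, h4.2, h5.1, h5.2]

lemma abs_perturbation_v_le {a b c d M e ψ u r ud ud' rd : ℝ} (hc : 0 < c) (hd : 0 < d)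
    (hψ : |ψ| ≤ e) (hu : |u| ≤ e) (hr : |r| ≤ e)
    (hud : |ud| ≤ M) (hud' : |ud'| ≤ M) (hrd : |rd| ≤ M) :
    |d * (a * r + b * ψ + c * ud * ψ) - u * (r + rd) + c * ud' * ψ| ≤
      (d * (|a| + |b| + c * M) + M + c * M + e) * e := by
  have h1 : |a * r| ≤ |a| * e := abs_mul_le_of_abs_le le_rfl hr
  have h2 : |b * ψ| ≤ |b| * e := abs_mul_le_of_abs_le le_rfl hψ
  have h3 : |c * ud * ψ| ≤ c * M * e :=
    abs_mul_le_of_abs_le (abs_mul_le_of_abs_le (abs_of_pos hc).le hud) hψ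
  have h4 : |u * (r + rd)| ≤ e * (e + M) :=
    abs_mul_le_of_abs_le hu ((abs_add_le _ _).trans (add_le_add hr hrd))
  have h5 : |c * ud' * ψ| ≤ c * M * e :=
    abs_mul_le_of_abs_le (abs_mul_le_of_abs_le (abs_of_pos hc).le hud') hψ
  have hsum : (d * (|a| + |b| + c * M) + M + c * M + e) * e =
      d * (|a| * e + |b| * e + c * M * e) + e * (e + M) + c * M * e := by
    ring
  rw [hsum]
  rw [abs_le] at h1 h2 h3 h4 h5 ⊢
  constructor <;> nlinarith [h1.1, h1.2, h2.1, h2.2, h3.1, h3.2, h4.1, h4.2, h5.1, h5.2]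

lemma sq_le_of_abs_le_mul_decay {D A B ε P w : ℝ} (hA : 0 ≤ A) (hB : 0 ≤ B) (hP : 0 ≤ P)
    (hD : |D| ≤ (A + B * ε) * ε) (hε : 0 ≤ ε) (hεP : ε ≤ P * w) (hw1 : w ≤ 1) :
    D ^ 2 ≤ ((A + B * P) * P) ^ 2 * w ^ 2 := by
  have hD' : |D| ≤ (A + B * P) * P * w := by
    refine hD.trans ?_
    rw [mul_assoc]
    gcongr
    exact hεP.trans (mul_le_of_le_one_right hP hw1)
  calc D ^ 2 = |D| ^ 2 := (sq_abs D).symm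
    _ ≤ ((A + B * P) * P * w) ^ 2 := pow_le_pow_left₀ (abs_nonneg _) hD' 2
    _ = _ := by ring

/-- The squares of the bounds of `abs_perturbation_x_le` and `abs_perturbation_v_le` at `e = P`,
weighted as in `d x² + v² / d`. -/
noncomputable def perturbationGain (a b c d M P : ℝ) : ℝ :=
  d * ((1 / c + 3 * M + M / d + (M + 1 / d) * P) * P) ^ 2 +
    ((d * (|a| + |b| + c * M) + M + c * M + P) * P) ^ 2 / d

lemma perturbationGain_nonneg (a b c : ℝ) {d : ℝ} (hd : 0 < d) (M P : ℝ) :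
    0 ≤ perturbationGain a b c d M P := by
  unfold perturbationGain
  positivity

lemma continuous_perturbationGain (a b c d M : ℝ) : Continuous (perturbationGain a b c d M) := by
  unfold perturbationGain
  fun_prop

lemma monotoneOn_perturbationGain {a b c d M : ℝ} (hc : 0 < c) (hd : 0 < d) (hM : 0 ≤ M) :
    MonotoneOn (perturbationGain a b c d M) (Ici 0) := by
  intro x (hx : 0 ≤ x) y (hy : 0 ≤ y) hxy
  unfold perturbationGain
  gcongr

lemma perturbation_sq_le {a b c d M P w z ψ u r ud ud' vd rd A : ℝ} (hc : 0 < c) (hd : 0 < d)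
    (hP : 0 ≤ P) (hA : A = if ψ = 0 then 0 else
      (ud * (cos ψ - 1 + ψ ^ 2 / 2) + vd * (sin ψ - ψ)) / ψ)
    (hud : |ud| ≤ M) (hud' : |ud'| ≤ M) (hvd : |vd| ≤ M) (hrd : |rd| ≤ M)
    (hε : norm4 z ψ u r ≤ P * w) (hw : w ≤ 1) :
    d * (u / c - A * ψ + 0.5 * ud * ψ ^ 2 - vd * ψ + z * (r + rd) / d) ^ 2 +
      (d * (a * r + b * ψ + c * ud * ψ) - u * (r + rd) + c * ud' * ψ) ^ 2 / d ≤
        perturbationGain a b c d M P * w ^ 2 := by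
  have hM : 0 ≤ M := (abs_nonneg _).trans hud
  obtain ⟨hz, hψ, hu, hr⟩ := abs_le_norm4 z ψ u r
  have hε₀ : 0 ≤ norm4 z ψ u r := sqrt_nonneg _
  have h₃ := sq_le_of_abs_le_mul_decay (by positivity) (by positivity) hP
    (abs_perturbation_x_le hc hd hz hψ hu hr hud hvd hrd (hA ▸ abs_ite_div_mul_self_le hud hvd))
    hε₀ hε hw
  have h₄ := sq_le_of_abs_le_mul_decay (A := d * (|a| + |b| + c * M) + M + c * M) (B := 1)
    (by positivity) zero_le_one hP
    (by rw [one_mul]; exact abs_perturbation_v_le (a := a) (b := b) hc hd hψ hu hr hud hud' hrd)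
    hε₀ hε hw
  rw [one_mul] at h₄
  calc _ ≤ d * (((1 / c + 3 * M + M / d + (M + 1 / d) * P) * P) ^ 2 * w ^ 2) +
        ((d * (|a| + |b| + c * M) + M + c * M + P) * P) ^ 2 * w ^ 2 / d := by gcongr
    _ = _ := by unfold perturbationGain; ring

lemma isClassK_cascade_bound {a b c d M k μ : ℝ} {ρ : ℝ → ℝ} (hρ : IsClassK ρ)
    (hc : 0 < c) (hd : 0 < d) (hM : 0 ≤ M) (hk : 0 < k) (hμk : μ < k) :
    IsClassK fun s => √((d + 1 / d) ^ 2 * s ^ 2 +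
      ((d + 1 / d) * (perturbationGain a b c d M (ρ s) / k / (k - μ)) + ρ s ^ 2)) := by
  have hkμ : 0 < k - μ := sub_pos.mpr hμk
  refine hρ.sqrt_mul_sq_add_comp (F := fun P =>
      (d + 1 / d) * (perturbationGain a b c d M P / k / (k - μ)) + P ^ 2) (by positivity)
    (by have := continuous_perturbationGain a b c d M; fun_prop)
    (fun x (hx : 0 ≤ x) y hy hxy => ?_) (by simp [perturbationGain])
  have := monotoneOn_perturbationGain (a := a) (b := b) hc hd hM hx hy hxy
  dsimp only
  gcongr

theorem stmt4_general (a b c d : ℝ) (hc : 0 < c) (hd : 0 < d)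
    (ud ud' rd rd' vd : ℝ → ℝ)
    (hvd : ∀ t : ℝ, 0 ≤ t →
      HasDerivAt vd (-a * rd' t - b * rd t - c * ud t * rd t - d * vd t) t)
    (hbdd : ∃ M : ℝ, ∀ t : ℝ, 0 ≤ t →
      |ud t| ≤ M ∧ |ud' t| ≤ M ∧ |rd t| ≤ M ∧ |rd' t| ≤ M)
    (α Φ : ℝ → ℝ → ℝ)
    (hα : ∀ t ψ : ℝ, α t ψ =
      if ψ = 0 then 0 else
        (ud t * (Real.cos ψ - 1 + ψ ^ 2 / 2) + vd t * (Real.sin ψ - ψ)) / ψ)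
    (τ₁e τ₂e : ℝ → ℝ → ℝ → ℝ → ℝ → ℝ)
    (hGKES : ∃ (ρ₁ : ℝ → ℝ) (γ : ℝ), IsClassK ρ₁ ∧ 0 < γ ∧
      ∀ ze ψe ue re : ℝ → ℝ,
        (∀ t : ℝ, 0 ≤ t →
          HasDerivAt ze (Φ t (ψe t) * ψe t - ue t * (re t + rd t)) t ∧
          HasDerivAt ψe (re t) t ∧
          HasDerivAt re (τ₂e t (ze t) (ψe t) (ue t) (re t)) t ∧
          HasDerivAt ue (τ₁e t (ze t) (ψe t) (ue t) (re t)) t) →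
        ∀ t : ℝ, 0 ≤ t →
          norm4 (ze t) (ψe t) (ue t) (re t) ≤
            ρ₁ (norm4 (ze 0) (ψe 0) (ue 0) (re 0)) * Real.exp (-γ * t)) :
    ∃ (ρ₄ : ℝ → ℝ) (γ' : ℝ), IsClassK ρ₄ ∧ 0 < γ' ∧
      ∀ xe vbe ze ψe ue re : ℝ → ℝ,
        (∀ t : ℝ, 0 ≤ t →
          HasDerivAt xe (-(d / c) * xe t - (1 / d) * (re t + rd t) * vbe t +
            (ue t / c - α t (ψe t) * ψe t + 0.5 * ud t * ψe t ^ 2 - vd t * ψe t +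
              ze t * (re t + rd t) / d)) t ∧
          HasDerivAt vbe (-d * vbe t + d * xe t * (re t + rd t) +
            (d * (a * re t + b * ψe t + c * ud t * ψe t) - ue t * (re t + rd t) +
              c * ud' t * ψe t)) t ∧
          HasDerivAt ze (Φ t (ψe t) * ψe t - ue t * (re t + rd t)) t ∧
          HasDerivAt ψe (re t) t ∧
          HasDerivAt re (τ₂e t (ze t) (ψe t) (ue t) (re t)) t ∧
          HasDerivAt ue (τ₁e t (ze t) (ψe t) (ue t) (re t)) t) →
        ∀ t : ℝ, 0 ≤ t →
          norm6 (xe t) (vbe t) (ze t) (ψe t) (ue t) (re t) ≤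
            ρ₄ (norm6 (xe 0) (vbe 0) (ze 0) (ψe 0) (ue 0) (re 0)) * Real.exp (-γ' * t) := by
  obtain ⟨ρ₁, γ, hρ₁, hγ, hsub⟩ := hGKES
  obtain ⟨M, hM, hbound⟩ := exists_reference_bound hd hvd hbdd
  set k := min (d / c) d
  have hk : 0 < k := lt_min (by positivity) hd
  set μ := min (k / 2) γ
  have hμk : μ < k := (min_le_left _ _).trans_lt (by linarith)
  have hμγ : μ ≤ 2 * γ := (min_le_right _ _).trans (by linarith)
  refine ⟨_, μ / 2, isClassK_cascade_bound (a := a) (b := b) hρ₁ hc hd hM hk hμk,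
    half_pos (lt_min (half_pos hk) hγ), fun xe vbe ze ψe ue re hsol t ht => ?_⟩
  set P := ρ₁ (norm6 (xe 0) (vbe 0) (ze 0) (ψe 0) (ue 0) (re 0))
  have hP : 0 ≤ P := hρ₁.nonneg_s4 (sqrt_nonneg _)
  have hdecay (t : ℝ) (ht : 0 ≤ t) : norm4 (ze t) (ψe t) (ue t) (re t) ≤ P * exp (-γ * t) :=
    (hsub ze ψe ue re (fun t ht => (hsol t ht).2.2) t ht).trans <|
      mul_le_mul_of_nonneg_right (hρ₁.2.1.monotoneOn (sqrt_nonneg _) (sqrt_nonneg _)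
        (norm4_le_norm6 _ _ _ _ _ _)) (exp_pos _).le
  have hD (t : ℝ) (ht : 0 ≤ t) := by
    obtain ⟨hud, hud', hrd, -, hvd⟩ := hbound t ht
    have hw : exp (-γ * t) ≤ 1 := exp_le_one_iff.mpr (by nlinarith)
    exact (perturbation_sq_le (a := a) (b := b) hc hd hP (hα t (ψe t)) hud hud' hvd hrd
      (hdecay t ht) hw).trans
      (mul_le_mul_of_nonneg_left (exp_sq_le_exp hμγ ht) (perturbationGain_nonneg a b c hd M P))
  exact norm6_le_of_lyapunov_le hd hμk.le hμγ ht
    (cascade_lyapunov_le hd hk (min_le_left _ _) (min_le_right _ _) hμk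
      (perturbationGain_nonneg a b c hd M P) (fun t ht => (hsol t ht).1)
      (fun t ht => (hsol t ht).2.1) hD ht) (hdecay t ht)

/-- Cascade lemma for trajectory tracking: if the (z_e, ψ_e, ū_e, r_e)-subsystem is globally
κ-exponentially stable under the feedback laws (τ̄₁ₑ, τ₂ₑ), then the full error system
including (x_e, v̄_e) is also globally κ-exponentially stable. -/
theorem stmt4 (a b c d : ℝ) (hc : 0 < c) (hd : 0 < d)
    (ud ud' rd rd' vd : ℝ → ℝ)
    (hud : ∀ t : ℝ, 0 ≤ t → HasDerivAt ud (ud' t) t)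
    (hrd : ∀ t : ℝ, 0 ≤ t → HasDerivAt rd (rd' t) t)
    (hvd : ∀ t : ℝ, 0 ≤ t →
      HasDerivAt vd (-a * rd' t - b * rd t - c * ud t * rd t - d * vd t) t)
    (hbdd : ∃ M : ℝ, ∀ t : ℝ, 0 ≤ t →
      |ud t| ≤ M ∧ |ud' t| ≤ M ∧ |rd t| ≤ M ∧ |rd' t| ≤ M)
    (α Φ : ℝ → ℝ → ℝ)
    (hα : ∀ t ψ : ℝ, α t ψ =
      if ψ = 0 then 0 else
        (ud t * (Real.cos ψ - 1 + ψ ^ 2 / 2) + vd t * (Real.sin ψ - ψ)) / ψ)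
    (hΦ : ∀ t ψ : ℝ, Φ t ψ =
      d * (if ψ = 0 then 0 else
        (-(vd t) * (Real.cos ψ - 1 + ψ ^ 2 / 2) + ud t * (Real.sin ψ - ψ)) / ψ) +
      c * ud' t + 0.5 * d * vd t * ψ + d * ud t)
    (τ₁e τ₂e : ℝ → ℝ → ℝ → ℝ → ℝ → ℝ)
    (hτ₁cont : Continuous fun p : ℝ × ℝ × ℝ × ℝ × ℝ =>
      τ₁e p.1 p.2.1 p.2.2.1 p.2.2.2.1 p.2.2.2.2)
    (hτ₂cont : Continuous fun p : ℝ × ℝ × ℝ × ℝ × ℝ =>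
      τ₂e p.1 p.2.1 p.2.2.1 p.2.2.2.1 p.2.2.2.2)
    (hGKES : ∃ (ρ₁ : ℝ → ℝ) (γ : ℝ), IsClassK ρ₁ ∧ 0 < γ ∧
      ∀ ze ψe ue re : ℝ → ℝ,
        (∀ t : ℝ, 0 ≤ t →
          HasDerivAt ze (Φ t (ψe t) * ψe t - ue t * (re t + rd t)) t ∧
          HasDerivAt ψe (re t) t ∧
          HasDerivAt re (τ₂e t (ze t) (ψe t) (ue t) (re t)) t ∧
          HasDerivAt ue (τ₁e t (ze t) (ψe t) (ue t) (re t)) t) →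
        ∀ t : ℝ, 0 ≤ t →
          norm4 (ze t) (ψe t) (ue t) (re t) ≤
            ρ₁ (norm4 (ze 0) (ψe 0) (ue 0) (re 0)) * Real.exp (-γ * t)) :
    ∃ (ρ₄ : ℝ → ℝ) (γ' : ℝ), IsClassK ρ₄ ∧ 0 < γ' ∧
      ∀ xe vbe ze ψe ue re : ℝ → ℝ,
        (∀ t : ℝ, 0 ≤ t →
          HasDerivAt xe (-(d / c) * xe t - (1 / d) * (re t + rd t) * vbe t +
            (ue t / c - α t (ψe t) * ψe t + 0.5 * ud t * ψe t ^ 2 - vd t * ψe t +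
              ze t * (re t + rd t) / d)) t ∧
          HasDerivAt vbe (-d * vbe t + d * xe t * (re t + rd t) +
            (d * (a * re t + b * ψe t + c * ud t * ψe t) - ue t * (re t + rd t) +
              c * ud' t * ψe t)) t ∧
          HasDerivAt ze (Φ t (ψe t) * ψe t - ue t * (re t + rd t)) t ∧
          HasDerivAt ψe (re t) t ∧
          HasDerivAt re (τ₂e t (ze t) (ψe t) (ue t) (re t)) t ∧
          HasDerivAt ue (τ₁e t (ze t) (ψe t) (ue t) (re t)) t) →
        ∀ t : ℝ, 0 ≤ t →
          norm6 (xe t) (vbe t) (ze t) (ψe t) (ue t) (re t) ≤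
            ρ₄ (norm6 (xe 0) (vbe 0) (ze 0) (ψe 0) (ue 0) (re 0)) * Real.exp (-γ' * t) :=
  stmt4_general a b c d hc hd ud ud' rd rd' vd hvd hbdd α Φ hα τ₁e τ₂e hGKES
end

section
/- Let a, b ∈ ℝ and c, d > 0, and let x, y, ψ, u, v, r, τ₂ : I → ℝ be differentiable functions on an interval I satisfying ẋ = u cos ψ − v sin ψ, ẏ = u sin ψ + v cos ψ, ψ̇ = r, v̇ = −a τ₂ − b r − c u r − d v, and ṙ = τ₂ on I. Define x̄ = x cos ψ + y sin ψ, ȳ = −x sin ψ + y cos ψ, v̄ = v + a r + b ψ, z = d ȳ + v̄, and ū = c u + d x̄. Then on I: (i) x̄̇ = (ū − d x̄)/c + (z − v̄) r/d; (ii) v̄̇ = −(ū − d x̄) r − d(v̄ − a r − b ψ); (iii) ż = −ū r. -/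
/-!
`x̄, ȳ` are the coordinates of the position in the body frame rotated by `ψ`, so they satisfy
`x̄̇ = u + ȳ r` and `ȳ̇ = v − x̄ r`, while `v̄̇ = −c u r − d v`. The three identities are these
derivatives rewritten through the definitions of `ū`, `z` and `v̄`.
-/

open Real

section RotatedFrame

variable {x y ψ : ℝ → ℝ} {u v r t : ℝ}

theorem hasDerivAt_rotated_fst (hx : HasDerivAt x (u * cos (ψ t) - v * sin (ψ t)) t)
    (hy : HasDerivAt y (u * sin (ψ t) + v * cos (ψ t)) t) (hψ : HasDerivAt ψ r t) :
    HasDerivAt (fun s => x s * cos (ψ s) + y s * sin (ψ s))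
      (u + (-x t * sin (ψ t) + y t * cos (ψ t)) * r) t := by
  refine ((hx.mul hψ.cos).add (hy.mul hψ.sin)).congr_deriv ?_
  linear_combination u * sin_sq_add_cos_sq (ψ t)

theorem hasDerivAt_rotated_snd (hx : HasDerivAt x (u * cos (ψ t) - v * sin (ψ t)) t)
    (hy : HasDerivAt y (u * sin (ψ t) + v * cos (ψ t)) t) (hψ : HasDerivAt ψ r t) :
    HasDerivAt (fun s => -x s * sin (ψ s) + y s * cos (ψ s))
      (v - (x t * cos (ψ t) + y t * sin (ψ t)) * r) t := by
  refine ((hx.neg.mul hψ.sin).add (hy.mul hψ.cos)).congr_deriv ?_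
  rw [Pi.neg_apply]
  linear_combination v * sin_sq_add_cos_sq (ψ t)

end RotatedFrame

theorem stmt7_general (a b c d : ℝ) (hc : 0 < c) (hd : 0 < d)
    (I : Set ℝ) (x y ψ u v r τ₂ : ℝ → ℝ)
    (hx : ∀ t ∈ I, HasDerivAt x (u t * Real.cos (ψ t) - v t * Real.sin (ψ t)) t)
    (hy : ∀ t ∈ I, HasDerivAt y (u t * Real.sin (ψ t) + v t * Real.cos (ψ t)) t)
    (hψ : ∀ t ∈ I, HasDerivAt ψ (r t) t)
    (hv : ∀ t ∈ I, HasDerivAt v (-a * τ₂ t - b * r t - c * u t * r t - d * v t) t)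
    (hr : ∀ t ∈ I, HasDerivAt r (τ₂ t) t)
    (xb yb vb z ub : ℝ → ℝ)
    (hxb : ∀ t : ℝ, xb t = x t * Real.cos (ψ t) + y t * Real.sin (ψ t))
    (hyb : ∀ t : ℝ, yb t = -(x t) * Real.sin (ψ t) + y t * Real.cos (ψ t))
    (hvb : ∀ t : ℝ, vb t = v t + a * r t + b * ψ t)
    (hz : ∀ t : ℝ, z t = d * yb t + vb t)
    (hub : ∀ t : ℝ, ub t = c * u t + d * xb t) :
    ∀ t ∈ I,
      HasDerivAt xb ((ub t - d * xb t) / c + (z t - vb t) * r t / d) t ∧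
      HasDerivAt vb (-(ub t - d * xb t) * r t - d * (vb t - a * r t - b * ψ t)) t ∧
      HasDerivAt z (-(ub t * r t)) t := by
  intro t ht
  have hxb' : HasDerivAt xb (u t + yb t * r t) t := by
    rw [funext hxb, hyb]
    exact hasDerivAt_rotated_fst (hx t ht) (hy t ht) (hψ t ht)
  have hyb' : HasDerivAt yb (v t - xb t * r t) t := by
    rw [funext hyb, hxb]
    exact hasDerivAt_rotated_snd (hx t ht) (hy t ht) (hψ t ht)
  have hvb' : HasDerivAt vb (-(c * u t * r t) - d * v t) t := by
    rw [funext hvb]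
    exact (((hv t ht).add ((hr t ht).const_mul a)).add ((hψ t ht).const_mul b)).congr_deriv
      (by ring)
  have hz' : HasDerivAt z (d * (v t - xb t * r t) + (-(c * u t * r t) - d * v t)) t := by
    rw [funext hz]
    exact (hyb'.const_mul d).add hvb'
  refine ⟨hxb'.congr_deriv ?_, hvb'.congr_deriv ?_, hz'.congr_deriv ?_⟩
  · rw [hub, hz]
    field_simp
    ring
  · rw [hub, hvb]
    ring
  · rw [hub]
    ring

/-- The transformed coordinates x̄ = x cos ψ + y sin ψ, ȳ = −x sin ψ + y cos ψ,
v̄ = v + a r + b ψ, z = d ȳ + v̄, ū = c u + d x̄ satisfy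
x̄̇ = (ū − d x̄)/c + (z − v̄) r/d, v̄̇ = −(ū − d x̄) r − d(v̄ − a r − b ψ), ż = −ū r. -/
theorem stmt7 (a b c d : ℝ) (hc : 0 < c) (hd : 0 < d)
    (I : Set ℝ) (x y ψ u v r τ₂ : ℝ → ℝ)
    (hx : ∀ t ∈ I, HasDerivAt x (u t * Real.cos (ψ t) - v t * Real.sin (ψ t)) t)
    (hy : ∀ t ∈ I, HasDerivAt y (u t * Real.sin (ψ t) + v t * Real.cos (ψ t)) t)
    (hψ : ∀ t ∈ I, HasDerivAt ψ (r t) t)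
    (hv : ∀ t ∈ I, HasDerivAt v (-a * τ₂ t - b * r t - c * u t * r t - d * v t) t)
    (hr : ∀ t ∈ I, HasDerivAt r (τ₂ t) t)
    (hτ₂ : ∀ t ∈ I, DifferentiableAt ℝ τ₂ t)
    (xb yb vb z ub : ℝ → ℝ)
    (hxb : ∀ t : ℝ, xb t = x t * Real.cos (ψ t) + y t * Real.sin (ψ t))
    (hyb : ∀ t : ℝ, yb t = -(x t) * Real.sin (ψ t) + y t * Real.cos (ψ t))
    (hvb : ∀ t : ℝ, vb t = v t + a * r t + b * ψ t)
    (hz : ∀ t : ℝ, z t = d * yb t + vb t)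
    (hub : ∀ t : ℝ, ub t = c * u t + d * xb t) :
    ∀ t ∈ I,
      HasDerivAt xb ((ub t - d * xb t) / c + (z t - vb t) * r t / d) t ∧
      HasDerivAt vb (-(ub t - d * xb t) * r t - d * (vb t - a * r t - b * ψ t)) t ∧
      HasDerivAt z (-(ub t * r t)) t :=
  stmt7_general a b c d hc hd I x y ψ u v r τ₂ hx hy hψ hv hr xb yb vb z ub hxb hyb hvb hz hub
end

section
/- Let k₁, k₂, k₃, k₄ > 0 and let f : ℝ → ℝ be a C^∞ function with f(z) = 0 if and only if z = 0. Let z, ψ, ū, r : [t₀,∞) → ℝ be a solution of the closed-loop stabilization subsystem ż = −ū r, ψ̇ = r, ū̇ = k₁ z r − k₂ ū, ṙ = −k₃ ψ − k₄ r + f(z) cos t. Then ū(t) → 0 as t → ∞, and moreover z(t) ū̇(t) has limit 0 and z(t) r(t) → 0 as t → ∞. -/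
open Real Filter Set

set_option maxHeartbeats 1600000

section helpers

private lemma lip_of_deriv_bound' {a C : ℝ} {F F' : ℝ → ℝ}
    (hF : ∀ t ∈ Ici a, HasDerivAt F (F' t) t)
    (hC : ∀ t ∈ Ici a, |F' t| ≤ C) {x y : ℝ} (hx : x ∈ Ici a) (hy : y ∈ Ici a) :
    |F y - F x| ≤ C * |y - x| := by
  have := Convex.norm_image_sub_le_of_norm_hasDerivWithin_le
    (f := F) (f' := F') (s := Ici a)
    (fun t ht => (hF t ht).hasDerivWithinAt) (fun t ht => by simpa using hC t ht)
    (convex_Ici a) hx hy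
  simpa [Real.norm_eq_abs] using this

private lemma antitoneOn_Ici_of_deriv_nonpos' {a : ℝ} {F F' : ℝ → ℝ}
    (hF : ∀ t ∈ Ici a, HasDerivAt F (F' t) t)
    (h0 : ∀ t ∈ Ici a, F' t ≤ 0) : AntitoneOn F (Ici a) := by
  apply antitoneOn_of_deriv_nonpos (convex_Ici a)
  · exact fun t ht => (hF t ht).continuousAt.continuousWithinAt
  · intro t ht
    rw [interior_Ici] at ht
    exact ((hF t (mem_Ici.2 ht.le)).differentiableAt).differentiableWithinAt
  · intro t ht
    rw [interior_Ici] at ht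
    rw [(hF t (mem_Ici.2 ht.le)).deriv]
    exact h0 t (mem_Ici.2 ht.le)

private lemma tendsto_of_antitoneOn_bddBelow' {a m : ℝ} {F : ℝ → ℝ}
    (hA : AntitoneOn F (Ici a)) (hm : ∀ t ∈ Ici a, m ≤ F t) :
    ∃ ℓ, Tendsto F atTop (nhds ℓ) := by
  set G : ℝ → ℝ := fun t => F (max t a) with hG
  have hGanti : Antitone G := by
    intro s t hst
    exact hA (le_max_right s a) (le_max_right t a) (max_le_max hst le_rfl)
  have hGbdd : BddBelow (Set.range G) := by
    refine ⟨m, ?_⟩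
    rintro x ⟨t, rfl⟩
    exact hm _ (le_max_right t a)
  refine ⟨⨅ t, G t, ?_⟩
  have h1 : Tendsto G atTop (nhds (⨅ t, G t)) := tendsto_atTop_ciInf hGanti hGbdd
  refine h1.congr' ?_
  filter_upwards [eventually_ge_atTop a] with t ht
  simp [hG, max_eq_left ht]

/-- Barbalat-type: if F → ℓ and F' has a bounded derivative on [a,∞), then F' → 0. -/
private lemma deriv_tendsto_zero' {a L ℓ : ℝ} {F F' F'' : ℝ → ℝ}
    (hF : ∀ t ∈ Ici a, HasDerivAt F (F' t) t)
    (hF' : ∀ t ∈ Ici a, HasDerivAt F' (F'' t) t)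
    (hL : ∀ t ∈ Ici a, |F'' t| ≤ L)
    (hlim : Tendsto F atTop (nhds ℓ)) : Tendsto F' atTop (nhds 0) := by
  have hL0 : 0 ≤ L := le_trans (abs_nonneg _) (hL a self_mem_Ici)
  rw [Metric.tendsto_nhds]
  intro ε hε
  set δ : ℝ := ε / (2 * (L + 1)) with hδdef
  have hδ : 0 < δ := by positivity
  have hLδ : L * δ ≤ ε / 2 := by
    have h2 : (0:ℝ) < 2*(L+1) := by positivity
    rw [hδdef, ← mul_div_assoc, div_le_div_iff₀ h2 two_pos]
    nlinarith
  have hsub : Tendsto (fun t => F (t + δ) - F t) atTop (nhds 0) := by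
    have h1 : Tendsto (fun t => F (t + δ)) atTop (nhds ℓ) :=
      hlim.comp (tendsto_atTop_add_const_right _ δ tendsto_id)
    simpa using h1.sub hlim
  have hev : ∀ᶠ t in atTop, |F (t + δ) - F t| < ε * δ / 2 := by
    have := Metric.tendsto_nhds.mp hsub (ε * δ / 2) (by positivity)
    filter_upwards [this] with t ht
    simpa [Real.dist_eq] using ht
  filter_upwards [eventually_ge_atTop a, hev] with t hta hsmall
  have key : |F (t + δ) - F t - F' t * δ| ≤ L * δ * δ := by
    set G : ℝ → ℝ := fun s => F s - F' t * s with hGdef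
    have hGd : ∀ s ∈ Icc t (t + δ), HasDerivWithinAt G (F' s - F' t) (Icc t (t + δ)) s := by
      intro s hs
      have hid : HasDerivAt (fun y : ℝ => F' t * y) (F' t) s := by
        simpa using (hasDerivAt_id s).const_mul (F' t)
      have : HasDerivAt G (F' s - F' t) s := (hF s (le_trans hta hs.1)).sub hid
      exact this.hasDerivWithinAt
    have hGb : ∀ s ∈ Icc t (t + δ), ‖F' s - F' t‖ ≤ L * δ := by
      intro s hs
      have h1 : |F' s - F' t| ≤ L * |s - t| :=
        lip_of_deriv_bound' hF' hL hta (le_trans hta hs.1)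
      have h2 : |s - t| ≤ δ := by
        rw [abs_of_nonneg (by linarith [hs.1])]
        linarith [hs.2]
      calc ‖F' s - F' t‖ = |F' s - F' t| := rfl
        _ ≤ L * |s - t| := h1
        _ ≤ L * δ := by nlinarith
    have := Convex.norm_image_sub_le_of_norm_hasDerivWithin_le hGd hGb
      (convex_Icc t (t + δ)) (left_mem_Icc.2 (by linarith)) (right_mem_Icc.2 (by linarith))
    have h3 : G (t + δ) - G t = F (t + δ) - F t - F' t * δ := by
      simp only [hGdef]; ring
    rw [h3] at this
    simpa [Real.norm_eq_abs, abs_of_pos hδ] using this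
  have hLδδ : L * δ * δ ≤ ε / 2 * δ := by nlinarith
  have habs : |F' t| * δ ≤ |F (t + δ) - F t| + L * δ * δ := by
    have := abs_sub_abs_le_abs_sub (F' t * δ) (F (t + δ) - F t)
    have h4 : |F' t * δ| = |F' t| * δ := by
      rw [abs_mul, abs_of_pos hδ]
    have h5 : |F' t * δ - (F (t + δ) - F t)| = |F (t + δ) - F t - F' t * δ| := by
      rw [abs_sub_comm]
    linarith [this, key, h4.symm.le, h5.le, abs_nonneg (F (t + δ) - F t)]
  rw [Real.dist_eq, sub_zero]
  by_contra hcon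
  push_neg at hcon
  have : ε * δ ≤ |F' t| * δ := by nlinarith
  nlinarith [hsmall, habs, hLδδ]

/-- Linear differential inequality gives a uniform bound. -/
private lemma bound_of_deriv_le' {a α C : ℝ} (hα : 0 < α) {W W' : ℝ → ℝ}
    (hW : ∀ t ∈ Ici a, HasDerivAt W (W' t) t)
    (h : ∀ t ∈ Ici a, W' t ≤ C - α * W t) :
    ∀ t ∈ Ici a, W t ≤ C / α + |W a - C / α| := by
  set G : ℝ → ℝ := fun t => (W t - C / α) * Real.exp (α * t) with hGdef
  have hGd : ∀ t ∈ Ici a, HasDerivAt G ((W' t + α * (W t - C / α)) * Real.exp (α * t)) t := by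
    intro t ht
    have h1 : HasDerivAt (fun t => W t - C / α) (W' t) t := (hW t ht).sub_const _
    have h2 : HasDerivAt (fun t => Real.exp (α * t)) (α * Real.exp (α * t)) t := by
      simpa [mul_comm, Function.comp_def] using (Real.hasDerivAt_exp (α * t)).comp t
        ((hasDerivAt_id t).const_mul α)
    have := h1.fun_mul h2
    refine this.congr_deriv ?_
    ring
  have hanti : AntitoneOn G (Ici a) := by
    apply antitoneOn_of_deriv_nonpos (convex_Ici a)
    · exact fun t ht => (hGd t ht).continuousAt.continuousWithinAt
    · intro t ht
      rw [interior_Ici] at ht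
      exact (hGd t (mem_Ici.2 ht.le)).differentiableAt.differentiableWithinAt
    · intro t ht
      rw [interior_Ici] at ht
      rw [(hGd t (mem_Ici.2 ht.le)).deriv]
      have h3 : W' t + α * (W t - C / α) ≤ 0 := by
        have := h t (mem_Ici.2 ht.le)
        have : W' t + α * W t - C ≤ 0 := by linarith
        have hC : α * (C / α) = C := by field_simp
        nlinarith [hC]
      exact mul_nonpos_of_nonpos_of_nonneg h3 (Real.exp_pos _).le
  intro t ht
  have h5 : G t ≤ G a := hanti self_mem_Ici ht ht
  have h6 : G a ≤ |W a - C / α| * Real.exp (α * t) := by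
    calc G a = (W a - C / α) * Real.exp (α * a) := rfl
      _ ≤ |W a - C / α| * Real.exp (α * a) := by
          exact mul_le_mul_of_nonneg_right (le_abs_self _) (Real.exp_pos _).le
      _ ≤ |W a - C / α| * Real.exp (α * t) := by
          apply mul_le_mul_of_nonneg_left _ (abs_nonneg _)
          exact Real.exp_le_exp.2 (mul_le_mul_of_nonneg_left ht hα.le)
  have h7 : (W t - C / α) * Real.exp (α * t) ≤ |W a - C / α| * Real.exp (α * t) :=
    le_trans h5 h6
  have h8 : W t - C / α ≤ |W a - C / α| :=
    le_of_mul_le_mul_right (by simpa [mul_comm] using h7) (Real.exp_pos _)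
  linarith


private lemma key_ineq' {k₃ k₄ e M p q g : ℝ} (hk₃ : 0 < k₃) (hk₄ : 0 < k₄)
    (he0 : 0 < e) (he1 : e ≤ 1) (hek4 : e ≤ k₄) (hek34 : 4 * k₄ * e ≤ k₃)
    (hgM : |g| ≤ M) :
    k₃ * k₄ * ((k₃ * (2 * p * q) + 2 * q * (-k₃ * p - k₄ * q + g)
      + e * (q * q + p * (-k₃ * p - k₄ * q + g)))
      + (e / 2) * (k₃ * p ^ 2 + q ^ 2 + e * (p * q)))
    ≤ 8 * k₃ * M ^ 2 + 2 * k₄ * M ^ 2 := by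
  have hM0 : 0 ≤ M := le_trans (abs_nonneg _) hgM
  have hg2 : g ^ 2 ≤ M ^ 2 := by nlinarith [sq_abs g, le_abs_self g, neg_abs_le g]
  have hc1 : -(e * (k₄ - e/2) * k₃ * k₄) * (p * q)
      ≤ e^2 * (k₄ - e/2)^2 * k₃ * p^2 + (k₃ * k₄^2 / 4) * q^2 := by
    nlinarith [mul_nonneg hk₃.le (sq_nonneg (2 * e * (k₄ - e/2) * p + k₄ * q))]
  have hc2 : 2 * k₃ * k₄ * (q * g) ≤ (k₃ * k₄^2 / 8) * q^2 + 8 * k₃ * g^2 := by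
    nlinarith [mul_nonneg hk₃.le (sq_nonneg (k₄ * q - 8 * g))]
  have hc3 : e * k₃ * k₄ * (p * g) ≤ (e * k₃^2 * k₄ / 8) * p^2 + 2 * e * k₄ * g^2 := by
    nlinarith [mul_nonneg (mul_nonneg he0.le hk₄.le) (sq_nonneg (k₃ * p - 4 * g))]
  have hc2' : (k₄ - e/2)^2 ≤ k₄^2 := by nlinarith
  have hek : e * k₄^2 ≤ k₃ * k₄ / 4 := by nlinarith
  have hp : (e^2 * (k₄ - e/2)^2 * k₃ + e * k₃^2 * k₄ / 8 - e * k₃^2 * k₄ / 2) * p^2 ≤ 0 := by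
    have h1 : e^2 * (k₄ - e/2)^2 * k₃ ≤ e * k₃^2 * k₄ / 4 := by
      have h2 : e * (k₄ - e/2)^2 ≤ e * k₄^2 := mul_le_mul_of_nonneg_left hc2' he0.le
      have h2' : e * k₃ * (e * (k₄ - e/2)^2) ≤ e * k₃ * (e * k₄^2) :=
        mul_le_mul_of_nonneg_left h2 (by positivity)
      have h3' : e * k₃ * (e * k₄^2) ≤ e * k₃ * (k₃ * k₄ / 4) :=
        mul_le_mul_of_nonneg_left hek (by positivity)
      nlinarith [h2', h3']
    have h3 : e^2 * (k₄ - e/2)^2 * k₃ + e * k₃^2 * k₄ / 8 - e * k₃^2 * k₄ / 2 ≤ 0 := by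
      nlinarith
    exact mul_nonpos_of_nonpos_of_nonneg h3 (sq_nonneg p)
  have hq : (k₃ * k₄ * (3*e/2 - 2*k₄) + k₃ * k₄^2 / 4 + k₃ * k₄^2 / 8) * q^2 ≤ 0 := by
    have h3 : k₃ * k₄ * (3*e/2 - 2*k₄) + k₃ * k₄^2 / 4 + k₃ * k₄^2 / 8 ≤ 0 := by
      nlinarith [mul_le_mul_of_nonneg_left hek4 (by positivity : (0:ℝ) ≤ k₃ * k₄),
        mul_pos hk₃ hk₄]
    exact mul_nonpos_of_nonpos_of_nonneg h3 (sq_nonneg q)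
  have hgm1 : 8 * k₃ * g^2 ≤ 8 * k₃ * M^2 := by nlinarith
  have hgm2 : 2 * e * k₄ * g^2 ≤ 2 * k₄ * M^2 := by
    have a1 : 2 * e * k₄ * g^2 ≤ 2 * e * k₄ * M^2 :=
      mul_le_mul_of_nonneg_left hg2 (by positivity)
    have a2 : 2 * e * k₄ * M^2 ≤ 2 * k₄ * M^2 := by
      nlinarith [mul_le_mul_of_nonneg_right he1 (by positivity : (0:ℝ) ≤ 2 * k₄ * M^2)]
    linarith
  nlinarith [hc1, hc2, hc3, hp, hq, hgm1, hgm2]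

private lemma extract_bounds' {k₃ e BW p q : ℝ} (hk₃ : 0 < k₃)
    (he0 : 0 < e) (he1 : e ≤ 1) (hek3 : e ≤ k₃)
    (h1 : k₃ * p ^ 2 + q ^ 2 + e * (p * q) ≤ BW) :
    p ^ 2 ≤ 2 * BW / k₃ ∧ q ^ 2 ≤ 2 * BW := by
  have h2 : -(e/2) * (p ^ 2 + q ^ 2) ≤ e * (p * q) := by
    nlinarith [mul_nonneg he0.le (sq_nonneg (p + q))]
  have h3 : (k₃ - e/2) * p ^ 2 + (1 - e/2) * q ^ 2 ≤ BW := by nlinarith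
  constructor
  · rw [le_div_iff₀ hk₃]
    nlinarith [sq_nonneg p, sq_nonneg q]
  · nlinarith [sq_nonneg p, sq_nonneg q, mul_nonneg (sub_nonneg.mpr hek3) (sq_nonneg p)]


end helpers

/-- Along any solution of the closed-loop stabilization subsystem, ū(t) → 0,
z(t) ū̇(t) → 0, and z(t) r(t) → 0 as t → ∞. -/
theorem stmt9 (k₁ k₂ k₃ k₄ : ℝ) (hk₁ : 0 < k₁) (hk₂ : 0 < k₂) (hk₃ : 0 < k₃) (hk₄ : 0 < k₄)
    (f : ℝ → ℝ) (hf : ContDiff ℝ (⊤ : ℕ∞) f) (hf0 : ∀ z : ℝ, f z = 0 ↔ z = 0)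
    (t₀ : ℝ) (z ψ u r : ℝ → ℝ)
    (hsol : ∀ t, t₀ ≤ t →
      HasDerivAt z (-(u t * r t)) t ∧
      HasDerivAt ψ (r t) t ∧
      HasDerivAt u (k₁ * z t * r t - k₂ * u t) t ∧
      HasDerivAt r (-k₃ * ψ t - k₄ * r t + f (z t) * Real.cos t) t) :
    Tendsto (fun t => u t) atTop (nhds 0) ∧
    Tendsto (fun t => z t * (k₁ * z t * r t - k₂ * u t)) atTop (nhds 0) ∧
    Tendsto (fun t => z t * r t) atTop (nhds 0) := by
  -- named derivative functions
  set ud : ℝ → ℝ := fun t => k₁ * z t * r t - k₂ * u t with hud_def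
  set rd : ℝ → ℝ := fun t => -k₃ * ψ t - k₄ * r t + f (z t) * Real.cos t with hrd_def
  have hz : ∀ t ∈ Ici t₀, HasDerivAt z (-(u t * r t)) t := fun t ht => (hsol t ht).1
  have hψ : ∀ t ∈ Ici t₀, HasDerivAt ψ (r t) t := fun t ht => (hsol t ht).2.1
  have hu : ∀ t ∈ Ici t₀, HasDerivAt u (ud t) t := fun t ht => (hsol t ht).2.2.1
  have hr : ∀ t ∈ Ici t₀, HasDerivAt r (rd t) t := fun t ht => (hsol t ht).2.2.2
  -- Lyapunov function V
  set V : ℝ → ℝ := fun t => k₁ * z t ^ 2 + u t ^ 2 with hV_def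
  set Vd : ℝ → ℝ := fun t => -(2 * k₂) * u t ^ 2 with hVd_def
  have hVderiv : ∀ t ∈ Ici t₀, HasDerivAt V (Vd t) t := by
    intro t ht
    have h1 : HasDerivAt (fun s => z s ^ 2) (2 * z t ^ 1 * (-(u t * r t))) t := by
      exact_mod_cast (hz t ht).pow 2
    have h2 : HasDerivAt (fun s => u s ^ 2) (2 * u t ^ 1 * ud t) t := by
      exact_mod_cast (hu t ht).pow 2
    have := (h1.const_mul k₁).add h2
    refine this.congr_deriv ?_
    simp only [hVd_def, hud_def]
    ring
  have hVanti : AntitoneOn V (Ici t₀) :=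
    antitoneOn_Ici_of_deriv_nonpos' hVderiv
      (fun t ht => by simp only [hVd_def]; nlinarith [sq_nonneg (u t)])
  have hVnn : ∀ t ∈ Ici t₀, 0 ≤ V t := by
    intro t ht
    simp only [hV_def]
    positivity
  set V0 : ℝ := V t₀ with hV0_def
  have hVle : ∀ t ∈ Ici t₀, V t ≤ V0 := fun t ht => hVanti self_mem_Ici ht ht
  -- bounds on z and u
  set Bz : ℝ := Real.sqrt (V0 / k₁) with hBz_def
  set Bu : ℝ := Real.sqrt V0 with hBu_def
  have hBz0 : 0 ≤ Bz := Real.sqrt_nonneg _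
  have hBu0 : 0 ≤ Bu := Real.sqrt_nonneg _
  have habsz : ∀ t ∈ Ici t₀, |z t| ≤ Bz := by
    intro t ht
    have h1 : z t ^ 2 ≤ V0 / k₁ := by
      rw [le_div_iff₀ hk₁]
      have hv := hVle t ht
      simp only [hV_def] at hv
      nlinarith [hv, sq_nonneg (u t)]
    calc |z t| = Real.sqrt (z t ^ 2) := (Real.sqrt_sq_eq_abs _).symm
      _ ≤ Bz := Real.sqrt_le_sqrt h1
  have habsu : ∀ t ∈ Ici t₀, |u t| ≤ Bu := by
    intro t ht
    have h1 : u t ^ 2 ≤ V0 := by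
      have hv := hVle t ht
      simp only [hV_def] at hv
      nlinarith [hv, sq_nonneg (z t), mul_nonneg hk₁.le (sq_nonneg (z t))]
    calc |u t| = Real.sqrt (u t ^ 2) := (Real.sqrt_sq_eq_abs _).symm
      _ ≤ Bu := Real.sqrt_le_sqrt h1
  -- bound on the forcing term
  obtain ⟨M, hMb⟩ : ∃ M, ∀ x ∈ Icc (-Bz) Bz, |f x| ≤ M := by
    obtain ⟨M, hM⟩ := (isCompact_Icc (a := -Bz) (b := Bz)).exists_bound_of_continuousOn
      (hf.continuous.continuousOn)
    exact ⟨M, fun x hx => by simpa using hM x hx⟩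
  have hM0 : 0 ≤ M := le_trans (abs_nonneg _) (hMb 0 ⟨by linarith, hBz0⟩)
  have hg : ∀ t ∈ Ici t₀, |f (z t) * Real.cos t| ≤ M := by
    intro t ht
    have h1 : |f (z t)| ≤ M := by
      refine hMb (z t) ?_
      have := habsz t ht
      exact ⟨by linarith [(abs_le.mp this).1], (abs_le.mp this).2⟩
    calc |f (z t) * Real.cos t| = |f (z t)| * |Real.cos t| := abs_mul _ _
      _ ≤ M * 1 := mul_le_mul h1 (Real.abs_cos_le_one t) (abs_nonneg _) hM0
      _ = M := mul_one M
  -- the cross-term coefficient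
  set e : ℝ := min 1 (min k₃ (min k₄ (k₃ / (4 * k₄)))) with he_def
  have he0 : 0 < e := by
    apply lt_min one_pos
    apply lt_min hk₃
    apply lt_min hk₄
    positivity
  have he1 : e ≤ 1 := min_le_left _ _
  have hek3 : e ≤ k₃ := le_trans (min_le_right _ _) (min_le_left _ _)
  have hek4 : e ≤ k₄ := le_trans (min_le_right _ _) (le_trans (min_le_right _ _) (min_le_left _ _))
  have hek34 : 4 * k₄ * e ≤ k₃ := by
    have h1 : e ≤ k₃ / (4 * k₄) :=
      le_trans (min_le_right _ _) (le_trans (min_le_right _ _) (min_le_right _ _))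
    have h2 : (0:ℝ) < 4 * k₄ := by positivity
    rw [le_div_iff₀ h2] at h1
    linarith
  -- Lyapunov function W for (ψ, r)
  set W : ℝ → ℝ := fun t => k₃ * ψ t ^ 2 + r t ^ 2 + e * (ψ t * r t) with hW_def
  set Wd : ℝ → ℝ := fun t => k₃ * (2 * ψ t * r t) + 2 * r t * rd t
      + e * (r t * r t + ψ t * rd t) with hWd_def
  have hWderiv : ∀ t ∈ Ici t₀, HasDerivAt W (Wd t) t := by
    intro t ht
    have h1 : HasDerivAt (fun s => ψ s ^ 2) (2 * ψ t ^ 1 * r t) t := by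
      exact_mod_cast (hψ t ht).pow 2
    have h2 : HasDerivAt (fun s => r s ^ 2) (2 * r t ^ 1 * rd t) t := by
      exact_mod_cast (hr t ht).pow 2
    have h3 : HasDerivAt (fun s => ψ s * r s) (r t * r t + ψ t * rd t) t :=
      (hψ t ht).mul (hr t ht)
    have := ((h1.const_mul k₃).add h2).add (h3.const_mul e)
    refine this.congr_deriv ?_
    simp only [hWd_def]
    ring
  set CW : ℝ := (8 * k₃ * M ^ 2 + 2 * k₄ * M ^ 2) / (k₃ * k₄) with hCW_def
  have hWineq : ∀ t ∈ Ici t₀, Wd t ≤ CW - (e / 2) * W t := by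
    intro t ht
    have hgM : |f (z t) * Real.cos t| ≤ M := hg t ht
    have hT' := key_ineq' (p := ψ t) (q := r t) (g := f (z t) * Real.cos t)
      hk₃ hk₄ he0 he1 hek4 hek34 hgM
    have hWd_eq : Wd t = k₃ * (2 * ψ t * r t)
        + 2 * r t * (-k₃ * ψ t - k₄ * r t + f (z t) * Real.cos t)
        + e * (r t * r t + ψ t * (-k₃ * ψ t - k₄ * r t + f (z t) * Real.cos t)) := rfl
    have hW_eq : W t = k₃ * ψ t ^ 2 + r t ^ 2 + e * (ψ t * r t) := rfl
    have hkk : (0:ℝ) < k₃ * k₄ := mul_pos hk₃ hk₄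
    have hT : Wd t + (e/2) * W t ≤ CW := by
      rw [hWd_eq, hW_eq, hCW_def, le_div_iff₀ hkk]
      nlinarith [hT']
    linarith
  have hα : (0:ℝ) < e / 2 := by positivity
  have hWbound := bound_of_deriv_le' hα hWderiv hWineq
  set BW : ℝ := CW / (e / 2) + |W t₀ - CW / (e / 2)| with hBW_def
  -- extract bounds on ψ and r
  have hψr : ∀ t ∈ Ici t₀, ψ t ^ 2 ≤ 2 * BW / k₃ ∧ r t ^ 2 ≤ 2 * BW := by
    intro t ht
    have h1 : W t ≤ BW := hWbound t ht
    have hW_eq0 : W t = k₃ * ψ t ^ 2 + r t ^ 2 + e * (ψ t * r t) := rfl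
    rw [hW_eq0] at h1
    exact extract_bounds' hk₃ he0 he1 hek3 h1
  set Br : ℝ := Real.sqrt (2 * BW) with hBr_def
  set Bψ : ℝ := Real.sqrt (2 * BW / k₃) with hBψ_def
  have hBr0 : 0 ≤ Br := Real.sqrt_nonneg _
  have hBψ0 : 0 ≤ Bψ := Real.sqrt_nonneg _
  have habsr : ∀ t ∈ Ici t₀, |r t| ≤ Br := by
    intro t ht
    calc |r t| = Real.sqrt (r t ^ 2) := (Real.sqrt_sq_eq_abs _).symm
      _ ≤ Br := Real.sqrt_le_sqrt (hψr t ht).2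
  have habsψ : ∀ t ∈ Ici t₀, |ψ t| ≤ Bψ := by
    intro t ht
    calc |ψ t| = Real.sqrt (ψ t ^ 2) := (Real.sqrt_sq_eq_abs _).symm
      _ ≤ Bψ := Real.sqrt_le_sqrt (hψr t ht).1
  -- bounds on derivatives
  set Bud : ℝ := k₁ * Bz * Br + k₂ * Bu with hBud_def
  have habsud : ∀ t ∈ Ici t₀, |ud t| ≤ Bud := by
    intro t ht
    have h1 : |ud t| ≤ |k₁ * z t * r t| + |k₂ * u t| := by
      have := abs_add_le (k₁ * z t * r t) (-(k₂ * u t))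
      simpa [hud_def, sub_eq_add_neg] using this
    have h2 : |k₁ * z t * r t| = k₁ * |z t| * |r t| := by
      rw [abs_mul, abs_mul, abs_of_pos hk₁]
    have h3 : |k₂ * u t| = k₂ * |u t| := by rw [abs_mul, abs_of_pos hk₂]
    have h4 : k₁ * |z t| * |r t| ≤ k₁ * Bz * Br := by
      apply mul_le_mul (mul_le_mul le_rfl (habsz t ht) (abs_nonneg _) hk₁.le)
        (habsr t ht) (abs_nonneg _)
      positivity
    have h5 : k₂ * |u t| ≤ k₂ * Bu := mul_le_mul_of_nonneg_left (habsu t ht) hk₂.le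
    rw [hBud_def]
    linarith [h1, h2.le, h3.le, h4, h5, h2.ge, h3.ge]
  set Brd : ℝ := k₃ * Bψ + k₄ * Br + M with hBrd_def
  have habsrd : ∀ t ∈ Ici t₀, |rd t| ≤ Brd := by
    intro t ht
    have h1 : |rd t| ≤ |(-k₃) * ψ t| + |k₄ * r t| + |f (z t) * Real.cos t| := by
      have ha := abs_add_le (-k₃ * ψ t - k₄ * r t) (f (z t) * Real.cos t)
      have hb := abs_add_le (-k₃ * ψ t) (-(k₄ * r t))
      have hc : -k₃ * ψ t - k₄ * r t = -k₃ * ψ t + -(k₄ * r t) := by ring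
      rw [hc] at ha
      simp only [hrd_def, hc]
      have : |-(k₄ * r t)| = |k₄ * r t| := abs_neg _
      linarith [ha, hb, this.le, this.ge]
    have h2 : |(-k₃) * ψ t| = k₃ * |ψ t| := by
      rw [abs_mul, abs_neg, abs_of_pos hk₃]
    have h3 : |k₄ * r t| = k₄ * |r t| := by rw [abs_mul, abs_of_pos hk₄]
    have h4 : k₃ * |ψ t| ≤ k₃ * Bψ := mul_le_mul_of_nonneg_left (habsψ t ht) hk₃.le
    have h5 : k₄ * |r t| ≤ k₄ * Br := mul_le_mul_of_nonneg_left (habsr t ht) hk₄.le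
    rw [hBrd_def]
    linarith [h1, h2.le, h3.le, h4, h5, hg t ht, h2.ge, h3.ge]
  -- convergence of V
  obtain ⟨ℓ, hVlim⟩ := tendsto_of_antitoneOn_bddBelow' hVanti hVnn
  -- Barbalat for V : u → 0
  have hVd2 : ∀ t ∈ Ici t₀, HasDerivAt Vd (-(2 * k₂) * (2 * u t * ud t)) t := by
    intro t ht
    have h2 : HasDerivAt (fun s => u s ^ 2) (2 * u t ^ 1 * ud t) t := by
      exact_mod_cast (hu t ht).pow 2
    have := h2.const_mul (-(2 * k₂))
    refine this.congr_deriv ?_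
    ring
  have hVd2b : ∀ t ∈ Ici t₀, |(-(2 * k₂)) * (2 * u t * ud t)| ≤ 4 * k₂ * Bu * Bud := by
    intro t ht
    have h1 : |(-(2 * k₂)) * (2 * u t * ud t)| = 4 * k₂ * (|u t| * |ud t|) := by
      rw [abs_mul, abs_mul, abs_mul, abs_neg]
      rw [abs_of_pos (by linarith : (0:ℝ) < 2 * k₂), abs_of_pos (by norm_num : (0:ℝ) < 2)]
      ring
    rw [h1]
    have h2 : |u t| * |ud t| ≤ Bu * Bud :=
      mul_le_mul (habsu t ht) (habsud t ht) (abs_nonneg _) hBu0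
    nlinarith [h2]
  have hVd0 : Tendsto Vd atTop (nhds 0) :=
    deriv_tendsto_zero' hVderiv hVd2 hVd2b hVlim
  have hu2 : Tendsto (fun t => u t ^ 2) atTop (nhds 0) := by
    have h1 : Tendsto (fun t => (-(1 / (2 * k₂))) * Vd t) atTop (nhds ((-(1 / (2 * k₂))) * 0)) :=
      hVd0.const_mul _
    rw [mul_zero] at h1
    refine h1.congr fun t => ?_
    simp only [hVd_def]
    field_simp
  have hu0 : Tendsto (fun t => u t) atTop (nhds 0) := by
    apply squeeze_zero_norm (a := fun t => Real.sqrt (u t ^ 2))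
    · intro t
      rw [Real.norm_eq_abs, Real.sqrt_sq_eq_abs]
    · have := (Real.continuous_sqrt.tendsto 0).comp hu2
      simpa [Function.comp_def] using this
  -- Barbalat for u : ud → 0
  have hud2 : ∀ t ∈ Ici t₀,
      HasDerivAt ud (k₁ * (-(u t * r t)) * r t + k₁ * z t * rd t - k₂ * ud t) t := by
    intro t ht
    have hm : HasDerivAt (fun s => k₁ * z s * r s)
        (k₁ * (-(u t * r t)) * r t + k₁ * z t * rd t) t := by
      have h1 : HasDerivAt (fun s => k₁ * z s) (k₁ * (-(u t * r t))) t := (hz t ht).const_mul k₁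
      have := h1.fun_mul (hr t ht)
      convert this using 1
      all_goals ring
    have h2 : HasDerivAt (fun s => k₂ * u s) (k₂ * ud t) t := (hu t ht).const_mul k₂
    exact hm.sub h2
  have hud2b : ∀ t ∈ Ici t₀, |k₁ * (-(u t * r t)) * r t + k₁ * z t * rd t - k₂ * ud t|
      ≤ k₁ * (Bu * Br * Br) + k₁ * (Bz * Brd) + k₂ * Bud := by
    intro t ht
    have ha := abs_add_le (k₁ * (-(u t * r t)) * r t) (k₁ * z t * rd t)
    have hb := abs_add_le (k₁ * (-(u t * r t)) * r t + k₁ * z t * rd t) (-(k₂ * ud t))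
    have h1 : |k₁ * (-(u t * r t)) * r t| ≤ k₁ * (Bu * Br * Br) := by
      rw [abs_mul, abs_mul, abs_neg, abs_mul, abs_of_pos hk₁]
      have := mul_le_mul (mul_le_mul (habsu t ht) (habsr t ht) (abs_nonneg _) hBu0)
        (habsr t ht) (abs_nonneg _) (by positivity)
      nlinarith [this]
    have h2 : |k₁ * z t * rd t| ≤ k₁ * (Bz * Brd) := by
      rw [abs_mul, abs_mul, abs_of_pos hk₁]
      have := mul_le_mul (habsz t ht) (habsrd t ht) (abs_nonneg _) hBz0
      nlinarith [this]
    have h3 : |k₂ * ud t| ≤ k₂ * Bud := by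
      rw [abs_mul, abs_of_pos hk₂]
      exact mul_le_mul_of_nonneg_left (habsud t ht) hk₂.le
    have h4 : |(-(k₂ * ud t))| = |k₂ * ud t| := abs_neg _
    have h5 : k₁ * (-(u t * r t)) * r t + k₁ * z t * rd t - k₂ * ud t
        = (k₁ * (-(u t * r t)) * r t + k₁ * z t * rd t) + (-(k₂ * ud t)) := by ring
    rw [h5]
    calc |(k₁ * (-(u t * r t)) * r t + k₁ * z t * rd t) + (-(k₂ * ud t))|
        ≤ |k₁ * (-(u t * r t)) * r t + k₁ * z t * rd t| + |(-(k₂ * ud t))| := abs_add_le _ _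
      _ ≤ (|k₁ * (-(u t * r t)) * r t| + |k₁ * z t * rd t|) + |k₂ * ud t| := by
          rw [h4]; linarith [ha]
      _ ≤ k₁ * (Bu * Br * Br) + k₁ * (Bz * Brd) + k₂ * Bud := by linarith
  have hud0 : Tendsto ud atTop (nhds 0) :=
    deriv_tendsto_zero' hu hud2 hud2b hu0
  -- z * r → 0
  have hzr : Tendsto (fun t => z t * r t) atTop (nhds 0) := by
    have h1 : Tendsto (fun t => (1 / k₁) * (ud t + k₂ * u t)) atTop
        (nhds ((1 / k₁) * (0 + k₂ * 0))) :=
      ((hud0.add (hu0.const_mul k₂)).const_mul _)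
    have h2 : (1 / k₁) * ((0:ℝ) + k₂ * 0) = 0 := by ring
    rw [h2] at h1
    refine h1.congr fun t => ?_
    simp only [hud_def]
    field_simp
    ring
  -- z * ud → 0
  have hzud : Tendsto (fun t => z t * ud t) atTop (nhds 0) := by
    apply squeeze_zero_norm' (a := fun t => Bz * |ud t|)
    · filter_upwards [eventually_ge_atTop t₀] with t ht
      rw [Real.norm_eq_abs, abs_mul]
      exact mul_le_mul_of_nonneg_right (habsz t ht) (abs_nonneg _)
    · have h1 : Tendsto (fun t => |ud t|) atTop (nhds 0) := by
        have := (continuous_abs.tendsto 0).comp hud0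
        simpa [Function.comp_def] using this
      have := h1.const_mul Bz
      simpa using this
  exact ⟨hu0, hzud, hzr⟩
end

section
/- Let a, b ∈ ℝ and c, d > 0. Let u_d be differentiable, and let differentiable functions x_e, y_e, ψ_e, u_e, v_e, r_e, r : I → ℝ and a function τ_{2e} : I → ℝ on an interval I satisfy ẏ_e = v_e − v_d(cos ψ_e − 1) + u_d sin ψ_e − r x_e, ψ̇_e = r_e, ṙ_e = τ_{2e}, and v̇_e = −a τ_{2e} − b r_e − c u_e r − c u_d r_e − d v_e, where u_e = u − u_d and r = r_e + r_d for the full surge velocity u and yaw rate r. Define v̄_e = v_e + a r_e + b ψ_e + c u_d ψ_e, z_e = d y_e + v̄_e, ū_e = d x_e + c u_e, and β(t) = (−v_d(cos ψ_e − 1 + ψ_e²/2) + u_d(sin ψ_e − ψ_e))/ψ_e for ψ_e ≠ 0 with β = 0 when ψ_e = 0. Then on I: (i) v̄̇_e = −d(v̄_e − a r_e − b ψ_e − c u_d ψ_e) − (ū_e − d x_e) r + c u̇_d ψ_e; (ii) ż_e = (d β + c u̇_d + 0.5 d v_d ψ_e + d u_d) ψ_e − ū_e r. -/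
open Real

/-- Dynamics of the transformed tracking-error variables:
v̄̇_e = −d(v̄_e − a r_e − b ψ_e − c u_d ψ_e) − (ū_e − d x_e) r + c u̇_d ψ_e and
ż_e = (d β + c u̇_d + 0.5 d v_d ψ_e + d u_d) ψ_e − ū_e r. -/
theorem stmt16 (a b c d : ℝ) (hc : 0 < c) (hd : 0 < d)
    (I : Set ℝ)
    (xe ye ψe ue ve re r τ₂e ud ud' vd rd : ℝ → ℝ)
    (hud : ∀ t ∈ I, HasDerivAt ud (ud' t) t)
    (hye : ∀ t ∈ I, HasDerivAt ye
      (ve t - vd t * (Real.cos (ψe t) - 1) + ud t * Real.sin (ψe t) - r t * xe t) t)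
    (hψe : ∀ t ∈ I, HasDerivAt ψe (re t) t)
    (hre : ∀ t ∈ I, HasDerivAt re (τ₂e t) t)
    (hve : ∀ t ∈ I, HasDerivAt ve
      (-a * τ₂e t - b * re t - c * ue t * r t - c * ud t * re t - d * ve t) t)
    (hr : ∀ t ∈ I, r t = re t + rd t)
    (vbe ze ube : ℝ → ℝ)
    (hvbe : ∀ t : ℝ, vbe t = ve t + a * re t + b * ψe t + c * ud t * ψe t)
    (hze : ∀ t : ℝ, ze t = d * ye t + vbe t)
    (hube : ∀ t : ℝ, ube t = d * xe t + c * ue t)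
    (β : ℝ → ℝ)
    (hβ : ∀ t : ℝ, β t =
      if ψe t = 0 then 0 else
        (-(vd t) * (Real.cos (ψe t) - 1 + ψe t ^ 2 / 2) +
          ud t * (Real.sin (ψe t) - ψe t)) / ψe t) :
    ∀ t ∈ I,
      HasDerivAt vbe
        (-d * (vbe t - a * re t - b * ψe t - c * ud t * ψe t) -
          (ube t - d * xe t) * r t + c * ud' t * ψe t) t ∧
      HasDerivAt ze
        ((d * β t + c * ud' t + 0.5 * d * vd t * ψe t + d * ud t) * ψe t -
          ube t * r t) t := by
  intro t ht
  have hfe : vbe = fun t => ve t + a * re t + b * ψe t + c * (ud t * ψe t) :=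
    funext fun t => by rw [hvbe t]; ring
  have hd1 : HasDerivAt vbe
      ((-a * τ₂e t - b * re t - c * ue t * r t - c * ud t * re t - d * ve t)
        + a * τ₂e t + b * re t + c * (ud' t * ψe t + ud t * re t)) t := by
    rw [hfe]
    exact (((hve t ht).add ((hre t ht).const_mul a)).add
      ((hψe t ht).const_mul b)).add (((hud t ht).mul (hψe t ht)).const_mul c)
  have hd1' : HasDerivAt vbe
      (-d * (vbe t - a * re t - b * ψe t - c * ud t * ψe t) -
        (ube t - d * xe t) * r t + c * ud' t * ψe t) t := by
    convert hd1 using 1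
    rw [hvbe t, hube t]; ring
  refine ⟨hd1', ?_⟩
  have hze' : ze = fun t => d * ye t + vbe t := funext hze
  have hd2 : HasDerivAt ze
      (d * (ve t - vd t * (Real.cos (ψe t) - 1) + ud t * Real.sin (ψe t) - r t * xe t)
        + ((-a * τ₂e t - b * re t - c * ue t * r t - c * ud t * re t - d * ve t)
        + a * τ₂e t + b * re t + c * (ud' t * ψe t + ud t * re t))) t := by
    rw [hze']
    exact ((hye t ht).const_mul d).add hd1
  convert hd2 using 1
  rw [hβ t, hube t]
  by_cases h : ψe t = 0
  · simp [h]
    ring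
  · rw [if_neg h]
    field_simp
    ring
end

section
/- Let a, b ∈ ℝ, c, d > 0, and k₁, k₂, k₃, k₄ > 0. Let u_d be twice differentiable, r_d differentiable, and v_d differentiable with v̇_d = −a ṙ_d − b r_d − c u_d r_d − d v_d. Let (z_e, ψ_e, r_e, ū_e) : [0,∞) → ℝ⁴ be a solution of the closed-loop tracking subsystem ż_e = Φ(t, ψ_e) ψ_e − ū_e (r_e + r_d), ψ̇_e = r_e, ū̇_e = k₁ z_e (r_e + r_d) − k₃ ū_e, with r_e − r_ed differentiable and d/dt(r_e − r_ed) = −ψ_e − k₄ (r_e − r_ed), where r_ed(t) = −k₁ z_e(t) Φ(t, ψ_e(t)) − k₂ ψ_e(t). Then the function L₃(t) = 0.5(k₁ z_e(t)² + ψ_e(t)² + (r_e(t) − r_ed(t))² + ū_e(t)²) is differentiable and satisfies L̇₃(t) = −k₂ ψ_e(t)² − k₃ ū_e(t)² − k₄ (r_e(t) − r_ed(t))² ≤ 0 for all t ≥ 0. -/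
open Real

/-- Along any solution of the closed-loop tracking subsystem, the Lyapunov function
L₃ = 0.5(k₁ z_e² + ψ_e² + (r_e − r_ed)² + ū_e²) has derivative
−k₂ ψ_e² − k₃ ū_e² − k₄ (r_e − r_ed)² ≤ 0. -/
theorem stmt17 (a b c d k₁ k₂ k₃ k₄ : ℝ) (hc : 0 < c) (hd : 0 < d)
    (hk₁ : 0 < k₁) (hk₂ : 0 < k₂) (hk₃ : 0 < k₃) (hk₄ : 0 < k₄)
    (ud ud' ud'' rd rd' vd : ℝ → ℝ)
    (hud : ∀ t : ℝ, 0 ≤ t → HasDerivAt ud (ud' t) t)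
    (hud' : ∀ t : ℝ, 0 ≤ t → HasDerivAt ud' (ud'' t) t)
    (hrd : ∀ t : ℝ, 0 ≤ t → HasDerivAt rd (rd' t) t)
    (hvd : ∀ t : ℝ, 0 ≤ t →
      HasDerivAt vd (-a * rd' t - b * rd t - c * ud t * rd t - d * vd t) t)
    (Φ : ℝ → ℝ → ℝ)
    (hΦ : ∀ t ψ : ℝ, Φ t ψ =
      d * (if ψ = 0 then 0 else
        (-(vd t) * (Real.cos ψ - 1 + ψ ^ 2 / 2) + ud t * (Real.sin ψ - ψ)) / ψ) +
      c * ud' t + 0.5 * d * vd t * ψ + d * ud t)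
    (ze ψe re ue red : ℝ → ℝ)
    (hred : ∀ t : ℝ, red t = -(k₁ * ze t * Φ t (ψe t)) - k₂ * ψe t)
    (hsol : ∀ t : ℝ, 0 ≤ t →
      HasDerivAt ze (Φ t (ψe t) * ψe t - ue t * (re t + rd t)) t ∧
      HasDerivAt ψe (re t) t ∧
      HasDerivAt ue (k₁ * ze t * (re t + rd t) - k₃ * ue t) t ∧
      HasDerivAt (fun s => re s - red s) (-ψe t - k₄ * (re t - red t)) t) :
    ∀ t : ℝ, 0 ≤ t →
      HasDerivAt
        (fun s => 0.5 * (k₁ * ze s ^ 2 + ψe s ^ 2 + (re s - red s) ^ 2 + ue s ^ 2))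
        (-k₂ * ψe t ^ 2 - k₃ * ue t ^ 2 - k₄ * (re t - red t) ^ 2) t ∧
      -k₂ * ψe t ^ 2 - k₃ * ue t ^ 2 - k₄ * (re t - red t) ^ 2 ≤ 0 := by
  intro t ht
  obtain ⟨hz, hψ, hu, hr⟩ := hsol t ht
  constructor
  · have H : HasDerivAt
        (fun s => 0.5 * (k₁ * ze s ^ 2 + ψe s ^ 2 + (re s - red s) ^ 2 + ue s ^ 2))
        (0.5 * ((k₁ * ((2 : ℕ) * ze t ^ 1 * (Φ t (ψe t) * ψe t - ue t * (re t + rd t)))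
            + (2 : ℕ) * ψe t ^ 1 * re t)
          + (2 : ℕ) * (re t - red t) ^ 1 * (-ψe t - k₄ * (re t - red t))
          + (2 : ℕ) * ue t ^ 1 * (k₁ * ze t * (re t + rd t) - k₃ * ue t))) t := by
      exact ((((hz.pow 2).const_mul k₁).add (hψ.pow 2)).add (hr.pow 2)).add
        ((hu.pow 2)) |>.const_mul 0.5
    convert H using 1
    have h := hred t
    rw [h]
    push_cast
    ring
  · nlinarith [sq_nonneg (ψe t), sq_nonneg (ue t), sq_nonneg (re t - red t)]
end
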